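/- arXiv:2005.01808 — 11 statements merged into one kernel-verified Lean document; each statement's English description precedes it below -/
import Mathlib

section
/- (Local test for commutation) Let →1 and →2 be binary relations on a set A satisfying strong commutation: whenever b ←1 a →2 c there exists d with b →2* d and c →1= d. Then →1 and →2 commute. -/
open Relation

lemma strip_lemma {A : Type*} (r1 r2 : A → A → Prop)
    (hsc : ∀ a b c, r1 a b → r2 a c →
      ∃ d, Relation.ReflTransGen r2 b d ∧ Relation.ReflGen r1 c d) :
    ∀ a b c, r1 a b → Relation.ReflTransGen r2 a c →
      ∃ d, Relation.ReflTransGen r2 b d ∧ Relation.ReflGen r1 c d := by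
  intro a b c hab hac
  induction hac using Relation.ReflTransGen.head_induction_on generalizing b with
  | refl => exact ⟨b, ReflTransGen.refl, ReflGen.single hab⟩
  | head h htail ih =>
    rename_i x y
    obtain ⟨d, hbd, hyd⟩ := hsc x b y hab h
    cases hyd with
    | refl => exact ⟨c, hbd.trans htail, ReflGen.refl⟩
    | single h1 =>
      obtain ⟨e, hde, hce⟩ := ih _ h1
      exact ⟨e, hbd.trans hde, hce⟩

/-- Hindley's local test for commutation: strong commutation implies commutation. -/
theorem strong_commutation_implies_commutation {A : Type*} (r1 r2 : A → A → Prop)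
    (hsc : ∀ a b c, r1 a b → r2 a c →
      ∃ d, Relation.ReflTransGen r2 b d ∧ Relation.ReflGen r1 c d) :
    ∀ t u s, Relation.ReflTransGen r1 t u → Relation.ReflTransGen r2 t s →
      ∃ v, Relation.ReflTransGen r2 u v ∧ Relation.ReflTransGen r1 s v := by
  intro t u s htu hts
  induction htu generalizing s with
  | refl => exact ⟨s, hts, ReflTransGen.refl⟩
  | tail _ h1 ih =>
    obtain ⟨v, hv, hsv⟩ := ih s hts
    obtain ⟨w, hw, hvw⟩ := strip_lemma r1 r2 hsc _ _ _ h1 hv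
    exact ⟨w, hw, hsv.trans hvw.to_reflTransGen⟩
end

section
/- For any two binary relations e→ and i→ on a set A, the following are equivalent: (1) semi-local postponement: i→*·e→ ⊆ e→*·i→*; (2) postponement P(e,i): i→*·e→* ⊆ e→*·i→*; (3) factorization F(e,i): (e→ ∪ i→)* ⊆ e→*·i→*. Moreover these are also equivalent to the dual semi-local postponement i→·e→* ⊆ e→*·i→*. -/
/-- Equivalence of semi-local postponement, postponement, factorization,
and dual semi-local postponement. -/
theorem factorization_equivalences {A : Type*} (e i : A → A → Prop) :
    List.TFAE
      [ -- (1) semi-local postponement: i* · e ⊆ e* · i*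
        ∀ t u s, Relation.ReflTransGen i t u → e u s →
          ∃ v, Relation.ReflTransGen e t v ∧ Relation.ReflTransGen i v s,
        -- (2) postponement: i* · e* ⊆ e* · i*
        ∀ t u s, Relation.ReflTransGen i t u → Relation.ReflTransGen e u s →
          ∃ v, Relation.ReflTransGen e t v ∧ Relation.ReflTransGen i v s,
        -- (3) factorization: (e ∪ i)* ⊆ e* · i*
        ∀ t s, Relation.ReflTransGen (fun a b => e a b ∨ i a b) t s →
          ∃ v, Relation.ReflTransGen e t v ∧ Relation.ReflTransGen i v s,
        -- (4) dual semi-local postponement: i · e* ⊆ e* · i*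
        ∀ t u s, i t u → Relation.ReflTransGen e u s →
          ∃ v, Relation.ReflTransGen e t v ∧ Relation.ReflTransGen i v s ] := by
  tfae_have 1 → 2 := by
    intro h1 t u s htu hus
    induction hus with
    | refl => exact ⟨t, .refl, htu⟩
    | tail _ hbc ih =>
      obtain ⟨v, hv1, hv2⟩ := ih
      obtain ⟨w, hw1, hw2⟩ := h1 v _ _ hv2 hbc
      exact ⟨w, hv1.trans hw1, hw2⟩
  tfae_have 2 → 3 := by
    intro h2 t s hts
    induction hts with
    | refl => exact ⟨t, .refl, .refl⟩
    | tail _ hbc ih =>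
      obtain ⟨v, hv1, hv2⟩ := ih
      cases hbc with
      | inl he =>
        obtain ⟨w, hw1, hw2⟩ := h2 v _ _ hv2 (.single he)
        exact ⟨w, hv1.trans hw1, hw2⟩
      | inr hi => exact ⟨v, hv1, hv2.tail hi⟩
  tfae_have 3 → 4 := by
    intro h3 t u s htu hus
    exact h3 t s (.head (.inr htu) (Relation.ReflTransGen.mono (fun a b h => Or.inl h) _ _ hus))
  tfae_have 4 → 2 := by
    intro h4 t u s htu hus
    induction htu using Relation.ReflTransGen.head_induction_on with
    | refl => exact ⟨s, hus, .refl⟩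
    | head hab _ ih =>
      obtain ⟨v, hv1, hv2⟩ := ih
      obtain ⟨w, hw1, hw2⟩ := h4 _ _ _ hab hv1
      exact ⟨w, hw1, hw2.trans hv2⟩
  tfae_have 2 → 1 := by
    intro h2 t u s htu hus
    exact h2 t u s htu (.single hus)
  tfae_finish
end

section
/- (Hindley–Rosen transposed to factorization) Let →α = eα→ ∪ iα→ and →γ = eγ→ ∪ iγ→ be binary relations on a set A such that F(eα,iα) and F(eγ,iγ) hold. If moreover iα→*·eγ→* ⊆ eγ→*·iα→* and iγ→*·eα→* ⊆ eα→*·iγ→*, then the union →α ∪ →γ satisfies factorization F(e,i) with e→ := eα→ ∪ eγ→ and i→ := iα→ ∪ iγ→. -/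
open Relation

private lemma HR.comm {A : Type*} (i e1 e2 : A → A → Prop)
    (h1 : ∀ t u s, ReflTransGen i t u → ReflTransGen e1 u s →
      ∃ v, ReflTransGen e1 t v ∧ ReflTransGen i v s)
    (h2 : ∀ t u s, ReflTransGen i t u → ReflTransGen e2 u s →
      ∃ v, ReflTransGen e2 t v ∧ ReflTransGen i v s) :
    ∀ t u s, ReflTransGen i t u → ReflTransGen (fun a b => e1 a b ∨ e2 a b) u s →
      ∃ v, ReflTransGen (fun a b => e1 a b ∨ e2 a b) t v ∧ ReflTransGen i v s := by
  intro t u s hi he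
  induction he using Relation.ReflTransGen.head_induction_on generalizing t with
  | refl => exact ⟨t, ReflTransGen.refl, hi⟩
  | head hab _ ih =>
    rcases hab with hab | hab
    · obtain ⟨w, hw1, hw2⟩ := h1 t _ _ hi (ReflTransGen.single hab)
      obtain ⟨v, hv1, hv2⟩ := ih w hw2
      exact ⟨v, (ReflTransGen.mono (fun a b h => Or.inl h) _ _ hw1).trans hv1, hv2⟩
    · obtain ⟨w, hw1, hw2⟩ := h2 t _ _ hi (ReflTransGen.single hab)
      obtain ⟨v, hv1, hv2⟩ := ih w hw2
      exact ⟨v, (ReflTransGen.mono (fun a b h => Or.inr h) _ _ hw1).trans hv1, hv2⟩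

/-- Hindley–Rosen transposed to factorization: if →α = eα ∪ iα and →γ = eγ ∪ iγ both
factorize, and iα* · eγ* ⊆ eγ* · iα* and iγ* · eα* ⊆ eα* · iγ*, then the union
factorizes with essential steps eα ∪ eγ and internal steps iα ∪ iγ. -/
theorem hindley_rosen_factorization {A : Type*} (ea ia eg ig : A → A → Prop)
    (hfa : ∀ t s, Relation.ReflTransGen (fun a b => ea a b ∨ ia a b) t s →
      ∃ v, Relation.ReflTransGen ea t v ∧ Relation.ReflTransGen ia v s)
    (hfg : ∀ t s, Relation.ReflTransGen (fun a b => eg a b ∨ ig a b) t s →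
      ∃ v, Relation.ReflTransGen eg t v ∧ Relation.ReflTransGen ig v s)
    (hpp1 : ∀ t u s, Relation.ReflTransGen ia t u → Relation.ReflTransGen eg u s →
      ∃ v, Relation.ReflTransGen eg t v ∧ Relation.ReflTransGen ia v s)
    (hpp2 : ∀ t u s, Relation.ReflTransGen ig t u → Relation.ReflTransGen ea u s →
      ∃ v, Relation.ReflTransGen ea t v ∧ Relation.ReflTransGen ig v s) :
    ∀ t s, Relation.ReflTransGen (fun a b => (ea a b ∨ ia a b) ∨ (eg a b ∨ ig a b)) t s →
      ∃ v, Relation.ReflTransGen (fun a b => ea a b ∨ eg a b) t v ∧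
        Relation.ReflTransGen (fun a b => ia a b ∨ ig a b) v s := by
  -- ia* commutes over ea* (via hfa)
  have hia_ea : ∀ t u s, ReflTransGen ia t u → ReflTransGen ea u s →
      ∃ v, ReflTransGen ea t v ∧ ReflTransGen ia v s := by
    intro t u s h1 h2
    exact hfa t s ((ReflTransGen.mono (fun a b h => Or.inr h) _ _ h1).trans (ReflTransGen.mono (fun a b h => Or.inl h) _ _ h2))
  have hig_eg : ∀ t u s, ReflTransGen ig t u → ReflTransGen eg u s →
      ∃ v, ReflTransGen eg t v ∧ ReflTransGen ig v s := by
    intro t u s h1 h2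
    exact hfg t s ((ReflTransGen.mono (fun a b h => Or.inr h) _ _ h1).trans (ReflTransGen.mono (fun a b h => Or.inl h) _ _ h2))
  have cia := HR.comm ia ea eg hia_ea hpp1
  have cig := HR.comm ig ea eg hpp2 hig_eg
  intro t s h
  induction h using Relation.ReflTransGen.head_induction_on with
  | refl => exact ⟨s, ReflTransGen.refl, ReflTransGen.refl⟩
  | head hab _ ih =>
    obtain ⟨v, hv1, hv2⟩ := ih
    rcases hab with (hab | hab) | (hab | hab)
    · exact ⟨v, ReflTransGen.head (Or.inl hab) hv1, hv2⟩
    · obtain ⟨w, hw1, hw2⟩ := cia _ _ _ (ReflTransGen.single hab) hv1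
      exact ⟨w, hw1, (ReflTransGen.mono (fun a b h => Or.inl h) _ _ hw2).trans hv2⟩
    · exact ⟨v, ReflTransGen.head (Or.inr hab) hv1, hv2⟩
    · obtain ⟨w, hw1, hw2⟩ := cig _ _ _ (ReflTransGen.single hab) hv1
      exact ⟨w, hw1, (ReflTransGen.mono (fun a b h => Or.inr h) _ _ hw2).trans hv2⟩
end

section
/- (Modular factorization) Let →α = eα→ ∪ iα→ and →γ = eγ→ ∪ iγ→ be binary relations on a set A such that F(eα,iα) and F(eγ,iγ) hold. If the two linear swap conditions hold, namely iα→·eγ→ ⊆ eγ→·(→α)* and iγ→·eα→ ⊆ eα→·(→γ)*, then the union →α ∪ →γ satisfies factorization F(e,i) with e→ := eα→ ∪ eγ→ and i→ := iα→ ∪ iγ→, i.e., (→α ∪ →γ)* ⊆ (eα→ ∪ eγ→)*·(iα→ ∪ iγ→)*. -/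
/-- Lift the linear swap `iα · eγ ⊆ eγ · α*` to `iα* · eγ ⊆ eγ · α*`. -/
private lemma swap_lift {A : Type*} {ia eg al : A → A → Prop}
    (hswap : ∀ t u s, ia t u → eg u s →
      ∃ v, eg t v ∧ Relation.ReflTransGen al v s) :
    ∀ t u s, Relation.ReflTransGen ia t u → eg u s →
      ∃ v, eg t v ∧ Relation.ReflTransGen al v s := by
  intro t u s h
  induction h using Relation.ReflTransGen.head_induction_on with
  | refl => exact fun hu => ⟨s, hu, Relation.ReflTransGen.refl⟩
  | head hab _ ih =>
    intro hu
    obtain ⟨v, hv, hvs⟩ := ih hu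
    obtain ⟨w, hw, hws⟩ := hswap _ _ _ hab hv
    exact ⟨w, hw, hws.trans hvs⟩

/-- Push `α*` past `e*`: `α* · e* ⊆ e* · α*`, where `α = eα ∪ iα`
and `e ⊇ eα, eγ`, assuming factorization of `α` and the lifted swap. -/
private lemma push {A : Type*} {ea ia eg : A → A → Prop}
    (hfa : ∀ t s, Relation.ReflTransGen (fun a b => ea a b ∨ ia a b) t s →
      ∃ v, Relation.ReflTransGen ea t v ∧ Relation.ReflTransGen ia v s)
    (hswap : ∀ t u s, ia t u → eg u s →
      ∃ v, eg t v ∧ Relation.ReflTransGen (fun a b => ea a b ∨ ia a b) v s) :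
    ∀ t u v, Relation.ReflTransGen (fun a b => ea a b ∨ ia a b) t u →
      Relation.ReflTransGen (fun a b => ea a b ∨ eg a b) u v →
      ∃ w, Relation.ReflTransGen (fun a b => ea a b ∨ eg a b) t w ∧
        Relation.ReflTransGen (fun a b => ea a b ∨ ia a b) w v := by
  have hea : ∀ a b : A, ea a b → (ea a b ∨ eg a b) := fun _ _ h => Or.inl h
  have heg : ∀ a b : A, eg a b → (ea a b ∨ eg a b) := fun _ _ h => Or.inr h
  -- first: α* · eγ ⊆ e* · α*
  have L2 : ∀ t u s, Relation.ReflTransGen (fun a b => ea a b ∨ ia a b) t u →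
      eg u s → ∃ w, Relation.ReflTransGen (fun a b => ea a b ∨ eg a b) t w ∧
        Relation.ReflTransGen (fun a b => ea a b ∨ ia a b) w s := by
    intro t u s htu hus
    obtain ⟨m, hm1, hm2⟩ := hfa _ _ htu
    obtain ⟨v, hv, hvs⟩ := swap_lift hswap _ _ _ hm2 hus
    exact ⟨v, (Relation.ReflTransGen.mono hea _ _ hm1).tail (heg _ _ hv), hvs⟩
  intro t u v htu huv
  induction huv using Relation.ReflTransGen.head_induction_on generalizing t with
  | refl => exact ⟨t, Relation.ReflTransGen.refl, htu⟩
  | @head b c hbc _ ih =>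
    rcases hbc with hbc | hbc
    · exact ih t (htu.tail (Or.inl hbc))
    · obtain ⟨m, hm1, hm2⟩ := L2 t b c htu hbc
      obtain ⟨w, hw1, hw2⟩ := ih m hm2
      exact ⟨w, hm1.trans hw1, hw2⟩

/-- Modular factorization: if →α = eα ∪ iα and →γ = eγ ∪ iγ both factorize and the
two linear swap conditions iα · eγ ⊆ eγ · (→α)* and iγ · eα ⊆ eα · (→γ)* hold,
then the union →α ∪ →γ factorizes with e := eα ∪ eγ and i := iα ∪ iγ. -/
theorem modular_factorization {A : Type*} (ea ia eg ig : A → A → Prop)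
    (hfa : ∀ t s, Relation.ReflTransGen (fun a b => ea a b ∨ ia a b) t s →
      ∃ v, Relation.ReflTransGen ea t v ∧ Relation.ReflTransGen ia v s)
    (hfg : ∀ t s, Relation.ReflTransGen (fun a b => eg a b ∨ ig a b) t s →
      ∃ v, Relation.ReflTransGen eg t v ∧ Relation.ReflTransGen ig v s)
    (hswap1 : ∀ t u s, ia t u → eg u s →
      ∃ v, eg t v ∧ Relation.ReflTransGen (fun a b => ea a b ∨ ia a b) v s)
    (hswap2 : ∀ t u s, ig t u → ea u s →
      ∃ v, ea t v ∧ Relation.ReflTransGen (fun a b => eg a b ∨ ig a b) v s) :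
    ∀ t s, Relation.ReflTransGen (fun a b => (ea a b ∨ ia a b) ∨ (eg a b ∨ ig a b)) t s →
      ∃ v, Relation.ReflTransGen (fun a b => ea a b ∨ eg a b) t v ∧
        Relation.ReflTransGen (fun a b => ia a b ∨ ig a b) v s := by
  intro t s h
  induction h using Relation.ReflTransGen.head_induction_on with
  | refl => exact ⟨s, Relation.ReflTransGen.refl, Relation.ReflTransGen.refl⟩
  | @head t b hab _ ih =>
    obtain ⟨v, hv1, hv2⟩ := ih
    rcases hab with hab | hab
    · -- α step
      obtain ⟨w, hw1, hw2⟩ := push hfa hswap1 t b v (Relation.ReflTransGen.single hab) hv1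
      obtain ⟨m, hm1, hm2⟩ := hfa _ _ hw2
      exact ⟨m, hw1.trans (Relation.ReflTransGen.mono (fun _ _ h => Or.inl h) _ _ hm1),
        (Relation.ReflTransGen.mono (fun _ _ h => Or.inl h) _ _ hm2).trans hv2⟩
    · -- γ step
      obtain ⟨w, hw1, hw2⟩ := push hfg hswap2 t b v (Relation.ReflTransGen.single hab)
        (Relation.ReflTransGen.mono (fun _ _ h => Or.symm h) _ _ hv1)
      obtain ⟨m, hm1, hm2⟩ := hfg _ _ hw2
      exact ⟨m, (Relation.ReflTransGen.mono (fun _ _ h => Or.symm h) _ _ hw1).trans (Relation.ReflTransGen.mono (fun _ _ h => Or.inr h) _ _ hm1),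
        (Relation.ReflTransGen.mono (fun _ _ h => Or.inr h) _ _ hm2).trans hv2⟩
end

section
/- (Linear postponement, part 1) Let e→ and i→ be binary relations on a set A. If i→·e→ ⊆ e→·i→*, then i→* strongly postpones after e→ (i.e., i→*·e→ ⊆ e→*·(i→*)=), and consequently factorization F(e,i) holds: (e→ ∪ i→)* ⊆ e→*·i→*. -/
/-- Linear postponement, part 1: if i · e ⊆ e · i*, then i* strongly postpones
after e (i.e. i* · e ⊆ e* · (i*)⁼), and consequently factorization F(e,i) holds. -/
theorem linear_postponement_one {A : Type*} (e i : A → A → Prop)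
    (h : ∀ t u s, i t u → e u s → ∃ v, e t v ∧ Relation.ReflTransGen i v s) :
    (∀ t u s, Relation.ReflTransGen i t u → e u s →
      ∃ v, Relation.ReflTransGen e t v ∧ Relation.ReflGen (Relation.ReflTransGen i) v s)
    ∧
    (∀ t s, Relation.ReflTransGen (fun a b => e a b ∨ i a b) t s →
      ∃ v, Relation.ReflTransGen e t v ∧ Relation.ReflTransGen i v s) := by
  have L : ∀ t u s, Relation.ReflTransGen i t u → e u s →
      ∃ v, e t v ∧ Relation.ReflTransGen i v s := by
    intro t u s htu
    induction htu using Relation.ReflTransGen.head_induction_on with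
    | refl => exact fun hes => ⟨s, hes, Relation.ReflTransGen.refl⟩
    | head hab _ ih =>
      intro hes
      obtain ⟨d, hed, hid⟩ := ih hes
      obtain ⟨v, hev, hiv⟩ := h _ _ _ hab hed
      exact ⟨v, hev, hiv.trans hid⟩
  constructor
  · intro t u s htu hes
    obtain ⟨v, hev, hiv⟩ := L t u s htu hes
    exact ⟨v, Relation.ReflTransGen.single hev, Relation.ReflGen.single hiv⟩
  · intro t s hts
    induction hts with
    | refl => exact ⟨t, Relation.ReflTransGen.refl, Relation.ReflTransGen.refl⟩
    | tail _ hstep ih =>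
      obtain ⟨v, hev, hiv⟩ := ih
      rcases hstep with hE | hI
      · obtain ⟨w, hew, hiw⟩ := L _ _ _ hiv hE
        exact ⟨w, hev.tail hew, hiw⟩
      · exact ⟨v, hev, hiv.tail hI⟩
end

section
/- (Linear postponement, part 2) Let e→ and i→ be binary relations on a set A and let → := e→ ∪ i→. If i→·e→ ⊆ e→·→=, then strong postponement of i→ after e→ holds (i.e., i→·e→ ⊆ e→*·i→=), and consequently factorization F(e,i) holds: (e→ ∪ i→)* ⊆ e→*·i→*. -/
/-- Linear postponement, part 2: with → := e ∪ i, if i · e ⊆ e · →⁼, then strong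
postponement of i after e holds (i · e ⊆ e* · i⁼), and consequently
factorization F(e,i) holds. -/
theorem linear_postponement_two {A : Type*} (e i : A → A → Prop)
    (h : ∀ t u s, i t u → e u s →
      ∃ v, e t v ∧ Relation.ReflGen (fun a b => e a b ∨ i a b) v s) :
    (∀ t u s, i t u → e u s →
      ∃ v, Relation.ReflTransGen e t v ∧ Relation.ReflGen i v s)
    ∧
    (∀ t s, Relation.ReflTransGen (fun a b => e a b ∨ i a b) t s →
      ∃ v, Relation.ReflTransGen e t v ∧ Relation.ReflTransGen i v s) := by
  -- strong postponement: i · e ⊆ e* · i⁼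
  have sp : ∀ t u s, i t u → e u s →
      ∃ v, Relation.ReflTransGen e t v ∧ Relation.ReflGen i v s := by
    intro t u s hi he
    obtain ⟨v, hev, hvs⟩ := h t u s hi he
    cases hvs with
    | refl => exact ⟨_, Relation.ReflTransGen.single hev, Relation.ReflGen.refl⟩
    | single hstep =>
      cases hstep with
      | inl h' => exact ⟨s, (Relation.ReflTransGen.single hev).tail h',
          Relation.ReflGen.refl⟩
      | inr h' => exact ⟨v, Relation.ReflTransGen.single hev,
          Relation.ReflGen.single h'⟩
  refine ⟨sp, ?_⟩
  -- lemma A : i · e* ⊆ e* · i⁼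
  have A : ∀ t u s, i t u → Relation.ReflTransGen e u s →
      ∃ v, Relation.ReflTransGen e t v ∧ Relation.ReflGen i v s := by
    intro t u s hi hus
    induction hus using Relation.ReflTransGen.head_induction_on generalizing t with
    | refl => exact ⟨t, Relation.ReflTransGen.refl, Relation.ReflGen.single hi⟩
    | head h' hrest ih =>
      obtain ⟨w, htw, hw⟩ := sp _ _ _ hi h'
      cases hw with
      | refl => exact ⟨_, htw.trans hrest, Relation.ReflGen.refl⟩
      | single hiw =>
        obtain ⟨v, hv1, hv2⟩ := ih _ hiw
        exact ⟨v, htw.trans hv1, hv2⟩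
  -- lemma B : i* · e ⊆ e* · i*
  have B : ∀ t u s, Relation.ReflTransGen i t u → e u s →
      ∃ v, Relation.ReflTransGen e t v ∧ Relation.ReflTransGen i v s := by
    intro t u s htu he
    induction htu using Relation.ReflTransGen.head_induction_on with
    | refl => exact ⟨s, Relation.ReflTransGen.single he, Relation.ReflTransGen.refl⟩
    | head h' _ ih =>
      obtain ⟨w, h1, h2⟩ := ih
      obtain ⟨x, hx1, hx2⟩ := A _ _ _ h' h1
      refine ⟨x, hx1, ?_⟩
      cases hx2 with
      | refl => exact h2
      | single hxw => exact Relation.ReflTransGen.head hxw h2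
  intro t s hts
  induction hts with
  | refl => exact ⟨t, Relation.ReflTransGen.refl, Relation.ReflTransGen.refl⟩
  | tail _ hstep ih =>
    obtain ⟨v, h1, h2⟩ := ih
    cases hstep with
    | inr h' => exact ⟨v, h1, h2.tail h'⟩
    | inl h' =>
      obtain ⟨w, hw1, hw2⟩ := B _ _ _ h2 h'
      exact ⟨w, h1.trans hw1, hw2⟩
end

section
/- Let eα→, iα→, eγ→ be binary relations on a set A with →α := eα→ ∪ iα→. If the linear swap iα→·eγ→ ⊆ eγ→·(→α)* holds and →α satisfies factorization F(eα,iα), then iα→*·eγ→ ⊆ eγ→·eα→*·iα→*. -/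
/-- If the linear swap iα · eγ ⊆ eγ · (→α)* holds (→α := eα ∪ iα) and →α satisfies
factorization F(eα,iα), then iα* · eγ ⊆ eγ · eα* · iα*. -/
theorem swap_star_with_factorization {A : Type*} (ea ia eg : A → A → Prop)
    (hswap : ∀ t u s, ia t u → eg u s →
      ∃ v, eg t v ∧ Relation.ReflTransGen (fun a b => ea a b ∨ ia a b) v s)
    (hfa : ∀ t s, Relation.ReflTransGen (fun a b => ea a b ∨ ia a b) t s →
      ∃ v, Relation.ReflTransGen ea t v ∧ Relation.ReflTransGen ia v s) :
    ∀ t u s, Relation.ReflTransGen ia t u → eg u s →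
      ∃ v w, eg t v ∧ Relation.ReflTransGen ea v w ∧ Relation.ReflTransGen ia w s := by
  intro t u s htu
  induction htu using Relation.ReflTransGen.head_induction_on generalizing s with
  | refl => intro hts; exact ⟨s, s, hts, .refl, .refl⟩
  | head h _ ih =>
    intro hus
    obtain ⟨v, w, hv, hvw, hws⟩ := ih s hus
    obtain ⟨v', hv', hva⟩ := hswap _ _ _ h hv
    have hall : Relation.ReflTransGen (fun a b => ea a b ∨ ia a b) v' s :=
      (hva.trans (Relation.ReflTransGen.mono (fun a b hab => Or.inl hab) _ _ hvw)).trans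
        (Relation.ReflTransGen.mono (fun a b hab => Or.inr hab) _ _ hws)
    obtain ⟨x, hx1, hx2⟩ := hfa _ _ hall
    exact ⟨v', x, hv', hx1, hx2⟩
end

section
/- (Swap with head β) Let ↦γ be a root rule on untyped λ-terms with constants. If ↦γ is substitutive, then the linear swap ¬h→γ · h→β ⊆ h→β · (→γ)* holds, where h→β is the head β-step, ¬h→γ the non-head γ-step, and →γ the contextual closure of ↦γ. -/
/-! Untyped λ-terms over a set `K` of constants, in de Bruijn representation
(so that working modulo α-equivalence and capture-avoiding substitution are
built in). -/

inductive Term (K : Type) : Type where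
  | var : ℕ → Term K
  | const : K → Term K
  | lam : Term K → Term K
  | app : Term K → Term K → Term K

namespace Term

variable {K : Type}

/-- Shifting of free de Bruijn indices (≥ cutoff `c`) by one. -/
def lift (c : ℕ) : Term K → Term K
  | var m => if m < c then var m else var (m + 1)
  | const k => const k
  | lam t => lam (lift (c + 1) t)
  | app t s => app (lift c t) (lift c s)

/-- Capture-avoiding substitution of `u` for the free variable `n`. -/
def subst (n : ℕ) (u : Term K) : Term K → Term K
  | var m => if m = n then u else if n < m then var (m - 1) else var m
  | const k => const k
  | lam t => lam (subst (n + 1) (lift 0 u) t)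
  | app t s => app (subst n u t) (subst n u s)

/-- Values: variables, constants and abstractions. -/
def IsValue : Term K → Prop
  | var _ => True
  | const _ => True
  | lam _ => True
  | app _ _ => False

end Term

/-- One-hole contexts: C ::= ⟨·⟩ | C t | t C | λ.C -/
inductive Ctx (K : Type) : Type where
  | hole : Ctx K
  | appL : Ctx K → Term K → Ctx K
  | appR : Term K → Ctx K → Ctx K
  | lam : Ctx K → Ctx K

namespace Ctx

variable {K : Type}

/-- Plugging a term into the hole of a context (possibly capturing variables). -/
def plug : Ctx K → Term K → Term K
  | hole, t => t
  | appL C s, t => Term.app (C.plug t) s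
  | appR s C, t => Term.app s (C.plug t)
  | lam C, t => Term.lam (C.plug t)

/-- Applicative spine contexts ⟨·⟩ t1 … tn. -/
inductive IsSpine : Ctx K → Prop
  | hole : IsSpine hole
  | appL {C : Ctx K} (t : Term K) : IsSpine C → IsSpine (appL C t)

/-- Head contexts λx1…λxk.⟨·⟩ t1…tn. -/
inductive IsHead : Ctx K → Prop
  | spine {C : Ctx K} : IsSpine C → IsHead C
  | lam {C : Ctx K} : IsHead C → IsHead (lam C)

/-- Weak contexts W ::= ⟨·⟩ | W t | t W. -/
inductive IsWeak : Ctx K → Prop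
  | hole : IsWeak hole
  | appL {C : Ctx K} (t : Term K) : IsWeak C → IsWeak (appL C t)
  | appR (t : Term K) {C : Ctx K} : IsWeak C → IsWeak (appR t C)

/-- Left contexts L ::= ⟨·⟩ | L t | v L with v a value. -/
inductive IsLeft : Ctx K → Prop
  | hole : IsLeft hole
  | appL {C : Ctx K} (t : Term K) : IsLeft C → IsLeft (appL C t)
  | appR {v : Term K} {C : Ctx K} : v.IsValue → IsLeft C → IsLeft (appR v C)

end Ctx

/-- Contextual closure of a root rule. -/
def Step {K : Type} (root : Term K → Term K → Prop) (t s : Term K) : Prop :=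
  ∃ (C : Ctx K) (r r' : Term K), root r r' ∧ t = C.plug r ∧ s = C.plug r'

/-- Closure of a root rule under head contexts. -/
def HeadStep {K : Type} (root : Term K → Term K → Prop) (t s : Term K) : Prop :=
  ∃ (C : Ctx K) (r r' : Term K), C.IsHead ∧ root r r' ∧ t = C.plug r ∧ s = C.plug r'

/-- Closure of a root rule under non-head contexts. -/
def NonHeadStep {K : Type} (root : Term K → Term K → Prop) (t s : Term K) : Prop :=
  ∃ (C : Ctx K) (r r' : Term K), ¬ C.IsHead ∧ root r r' ∧ t = C.plug r ∧ s = C.plug r'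

/-- Closure of a root rule under weak contexts. -/
def WeakStep {K : Type} (root : Term K → Term K → Prop) (t s : Term K) : Prop :=
  ∃ (C : Ctx K) (r r' : Term K), C.IsWeak ∧ root r r' ∧ t = C.plug r ∧ s = C.plug r'

/-- Closure of a root rule under non-weak contexts. -/
def NonWeakStep {K : Type} (root : Term K → Term K → Prop) (t s : Term K) : Prop :=
  ∃ (C : Ctx K) (r r' : Term K), ¬ C.IsWeak ∧ root r r' ∧ t = C.plug r ∧ s = C.plug r'

/-- Closure of a root rule under left contexts. -/
def LeftStep {K : Type} (root : Term K → Term K → Prop) (t s : Term K) : Prop :=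
  ∃ (C : Ctx K) (r r' : Term K), C.IsLeft ∧ root r r' ∧ t = C.plug r ∧ s = C.plug r'

/-- Closure of a root rule under non-left contexts. -/
def NonLeftStep {K : Type} (root : Term K → Term K → Prop) (t s : Term K) : Prop :=
  ∃ (C : Ctx K) (r r' : Term K), ¬ C.IsLeft ∧ root r r' ∧ t = C.plug r ∧ s = C.plug r'

/-- A root rule is substitutive if it is stable under substitution. -/
def Substitutive {K : Type} (root : Term K → Term K → Prop) : Prop :=
  ∀ r r' n q, root r r' → root (Term.subst n q r) (Term.subst n q r')

/-- The β root rule: (λx.p) q ↦β p{x:=q}. -/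
def BetaRoot {K : Type} : Term K → Term K → Prop := fun t s =>
  ∃ p q, t = Term.app (Term.lam p) q ∧ s = Term.subst 0 q p

/-- The βv root rule: (λx.p) v ↦βv p{x:=v}, v a value. -/
def BetavRoot {K : Type} : Term K → Term K → Prop := fun t s =>
  ∃ p v, v.IsValue ∧ t = Term.app (Term.lam p) v ∧ s = Term.subst 0 v p

section Aux

variable {K : Type} {Rg : Term K → Term K → Prop}

/-- All free de Bruijn indices are `< N`. -/
def FvB : ℕ → Term K → Prop
  | N, .var m => m < N
  | _, .const _ => True
  | N, .lam t => FvB (N + 1) t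
  | N, .app t s => FvB N t ∧ FvB N s

lemma fvB_mono : ∀ (t : Term K) (N M : ℕ), N ≤ M → FvB N t → FvB M t := by
  intro t
  induction t with
  | var m => intro N M h hb; simp only [FvB] at *; omega
  | const k => intro N M h hb; trivial
  | lam t ih => intro N M h hb; exact ih _ _ (by omega) hb
  | app a b iha ihb => intro N M h hb; exact ⟨iha _ _ h hb.1, ihb _ _ h hb.2⟩

lemma fvB_exists : ∀ t : Term K, ∃ N, FvB N t := by
  intro t
  induction t with
  | var m => exact ⟨m + 1, by simp [FvB]⟩
  | const k => exact ⟨0, trivial⟩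
  | lam t ih =>
    obtain ⟨N, h⟩ := ih
    exact ⟨N, show FvB (N + 1) t from fvB_mono _ _ _ (by omega) h⟩
  | app a b iha ihb =>
    obtain ⟨N1, h1⟩ := iha; obtain ⟨N2, h2⟩ := ihb
    exact ⟨max N1 N2, fvB_mono _ _ _ (le_max_left _ _) h1,
      fvB_mono _ _ _ (le_max_right _ _) h2⟩

/-- A composite of substitutions realizing `lift c` on terms with free vars `< N`. -/
def shiftComp (c : ℕ) : ℕ → Term K → Term K
  | 0, t => t
  | N + 1, t =>
      if N < c then t else shiftComp c N (Term.subst N (Term.var (N + N + 1 - c)) t)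

lemma shiftComp_succ (c N : ℕ) (t : Term K) :
    shiftComp c (N + 1) t =
      if N < c then t else shiftComp c N (Term.subst N (Term.var (N + N + 1 - c)) t) := rfl

lemma shiftComp_root (hsub : Substitutive Rg) :
    ∀ (N : ℕ) {r r' : Term K}, Rg r r' → ∀ c, Rg (shiftComp c N r) (shiftComp c N r') := by
  intro N
  induction N with
  | zero => intro r r' h c; exact h
  | succ N ih =>
    intro r r' h c
    rw [shiftComp_succ, shiftComp_succ]
    split
    · exact h
    · exact ih (hsub _ _ _ _ h) c

lemma shiftComp_var_lt {m c : ℕ} (h : m < c) :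
    ∀ N, shiftComp c N (Term.var m : Term K) = Term.var m := by
  intro N
  induction N with
  | zero => rfl
  | succ N ih =>
    rw [shiftComp_succ]
    split
    · rfl
    · next hc =>
      have h1 : m ≠ N := by omega
      have h2 : ¬ N < m := by omega
      simp only [Term.subst, if_neg h1, if_neg h2]
      exact ih

lemma shiftComp_var_big :
    ∀ (N Y c : ℕ), c ≤ N → N ≤ Y →
      shiftComp c N (Term.var Y : Term K) = Term.var (Y - (N - c)) := by
  intro N
  induction N with
  | zero => intro Y c _ _; simp [shiftComp]
  | succ N ih =>
    intro Y c hc hNY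
    rw [shiftComp_succ]
    split
    · next h => congr 1; omega
    · next h =>
      have h1 : Y ≠ N := by omega
      have h2 : N < Y := by omega
      simp only [Term.subst, if_neg h1, if_pos h2]
      rw [ih (Y - 1) c (by omega) (by omega)]
      congr 1; omega

lemma shiftComp_var_ge {m c : ℕ} :
    ∀ N, c ≤ m → m < N → shiftComp c N (Term.var m : Term K) = Term.var (m + 1) := by
  intro N
  induction N with
  | zero => intro _ h; omega
  | succ N ih =>
    intro hc hm
    rw [shiftComp_succ]
    split
    · next h => exfalso; omega
    · next h =>
      by_cases hmN : m = N
      · subst hmN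
        simp only [Term.subst, if_pos rfl, if_true]
        rw [shiftComp_var_big m (m + m + 1 - c) c (by omega) (by omega)]
        congr 1; omega
      · have h2 : ¬ N < m := by omega
        simp only [Term.subst, if_neg hmN, if_neg h2]
        exact ih hc (by omega)

lemma shiftComp_const (k : K) : ∀ N c, shiftComp c N (Term.const k : Term K) = Term.const k := by
  intro N
  induction N with
  | zero => intro c; rfl
  | succ N ih =>
    intro c
    rw [shiftComp_succ]
    split
    · rfl
    · simp only [Term.subst]; exact ih c

lemma shiftComp_lam : ∀ (N c : ℕ) (t : Term K),
    shiftComp c N (Term.lam t) = Term.lam (shiftComp (c + 1) (N + 1) t) := by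
  intro N
  induction N with
  | zero =>
    intro c t
    rw [shiftComp_succ, if_pos (by omega)]
    rfl
  | succ N ih =>
    intro c t
    rw [shiftComp_succ, shiftComp_succ (c + 1) (N + 1)]
    split
    · next h => rw [if_pos (by omega)]
    · next h =>
      rw [if_neg (by omega)]
      simp only [Term.subst, Term.lift, Nat.not_lt_zero, if_neg (by omega : ¬ (N + N + 1 - c < 0))]
      rw [ih c _]
      have h2 : N + N + 1 - c + 1 = N + 1 + (N + 1) + 1 - (c + 1) := by omega
      rw [h2]
      simp

lemma shiftComp_app : ∀ (N c : ℕ) (a b : Term K),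
    shiftComp c N (Term.app a b) = Term.app (shiftComp c N a) (shiftComp c N b) := by
  intro N
  induction N with
  | zero => intro c a b; rfl
  | succ N ih =>
    intro c a b
    rw [shiftComp_succ, shiftComp_succ, shiftComp_succ]
    split
    · rfl
    · simp only [Term.subst]; exact ih c _ _

lemma shiftComp_eq_lift : ∀ (t : Term K) (c N : ℕ), c ≤ N → FvB N t →
    shiftComp c N t = Term.lift c t := by
  intro t
  induction t with
  | var m =>
    intro c N hc hb
    simp only [FvB] at hb
    by_cases h : m < c
    · rw [shiftComp_var_lt h]; simp [Term.lift, h]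
    · rw [shiftComp_var_ge N (by omega) hb]; simp [Term.lift, h]
  | const k => intro c N hc hb; rw [shiftComp_const]; rfl
  | lam t ih =>
    intro c N hc hb
    rw [shiftComp_lam, ih (c + 1) (N + 1) (by omega) hb]
    rfl
  | app a b iha ihb =>
    intro c N hc hb
    rw [shiftComp_app, iha c N hc hb.1, ihb c N hc hb.2]
    rfl

lemma root_lift (hsub : Substitutive Rg) {r r' : Term K} (h : Rg r r') (c : ℕ) :
    Rg (Term.lift c r) (Term.lift c r') := by
  obtain ⟨N1, h1⟩ := fvB_exists r
  obtain ⟨N2, h2⟩ := fvB_exists r'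
  have hcN : c ≤ max (max N1 N2) c := le_max_right _ _
  have hr1 : FvB (max (max N1 N2) c) r :=
    fvB_mono _ _ _ (le_trans (le_max_left N1 N2) (le_max_left _ c)) h1
  have hr2 : FvB (max (max N1 N2) c) r' :=
    fvB_mono _ _ _ (le_trans (le_max_right N1 N2) (le_max_left _ c)) h2
  rw [← shiftComp_eq_lift r c _ hcN hr1, ← shiftComp_eq_lift r' c _ hcN hr2]
  exact shiftComp_root hsub _ h c

lemma Step.appL' {a b : Term K} (s : Term K) (h : Step Rg a b) :
    Step Rg (Term.app a s) (Term.app b s) := by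
  obtain ⟨C, r, r', hr, rfl, rfl⟩ := h
  exact ⟨Ctx.appL C s, r, r', hr, rfl, rfl⟩

lemma Step.appR' {a b : Term K} (s : Term K) (h : Step Rg a b) :
    Step Rg (Term.app s a) (Term.app s b) := by
  obtain ⟨C, r, r', hr, rfl, rfl⟩ := h
  exact ⟨Ctx.appR s C, r, r', hr, rfl, rfl⟩

lemma Step.lam' {a b : Term K} (h : Step Rg a b) :
    Step Rg (Term.lam a) (Term.lam b) := by
  obtain ⟨C, r, r', hr, rfl, rfl⟩ := h
  exact ⟨Ctx.lam C, r, r', hr, rfl, rfl⟩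

lemma step_lift (hsub : Substitutive Rg) :
    ∀ (C : Ctx K) (r r' : Term K) (c : ℕ), Rg r r' →
      Step Rg (Term.lift c (C.plug r)) (Term.lift c (C.plug r')) := by
  intro C
  induction C with
  | hole => intro r r' c h; exact ⟨Ctx.hole, _, _, root_lift hsub h c, rfl, rfl⟩
  | appL C s ih =>
    intro r r' c h
    simp only [Ctx.plug, Term.lift]
    exact Step.appL' _ (ih r r' c h)
  | appR s C ih =>
    intro r r' c h
    simp only [Ctx.plug, Term.lift]
    exact Step.appR' _ (ih r r' c h)
  | lam C ih =>
    intro r r' c h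
    simp only [Ctx.plug, Term.lift]
    exact Step.lam' (ih r r' (c + 1) h)

lemma step_subst (hsub : Substitutive Rg) :
    ∀ (C : Ctx K) (r r' : Term K) (n : ℕ) (q : Term K), Rg r r' →
      Step Rg (Term.subst n q (C.plug r)) (Term.subst n q (C.plug r')) := by
  intro C
  induction C with
  | hole => intro r r' n q h; exact ⟨Ctx.hole, _, _, hsub _ _ _ _ h, rfl, rfl⟩
  | appL C s ih =>
    intro r r' n q h
    simp only [Ctx.plug, Term.subst]
    exact Step.appL' _ (ih r r' n q h)
  | appR s C ih =>
    intro r r' n q h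
    simp only [Ctx.plug, Term.subst]
    exact Step.appR' _ (ih r r' n q h)
  | lam C ih =>
    intro r r' n q h
    simp only [Ctx.plug, Term.subst]
    exact Step.lam' (ih r r' (n + 1) (Term.lift 0 q) h)

lemma rtg_lam {a b : Term K} (h : Relation.ReflTransGen (Step Rg) a b) :
    Relation.ReflTransGen (Step Rg) (Term.lam a) (Term.lam b) :=
  Relation.ReflTransGen.lift Term.lam (fun _ _ => Step.lam') _ _ h

lemma rtg_appL {a b : Term K} (s : Term K) (h : Relation.ReflTransGen (Step Rg) a b) :
    Relation.ReflTransGen (Step Rg) (Term.app a s) (Term.app b s) :=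
  Relation.ReflTransGen.lift (fun x => Term.app x s) (fun _ _ => Step.appL' s) _ _ h

lemma rtg_appR {a b : Term K} (s : Term K) (h : Relation.ReflTransGen (Step Rg) a b) :
    Relation.ReflTransGen (Step Rg) (Term.app s a) (Term.app s b) :=
  Relation.ReflTransGen.lift (fun x => Term.app s x) (fun _ _ => Step.appR' s) _ _ h

lemma rtg_subst_arg (hsub : Substitutive Rg) :
    ∀ (p q q' : Term K) (n : ℕ), Step Rg q q' →
      Relation.ReflTransGen (Step Rg) (Term.subst n q p) (Term.subst n q' p) := by
  intro p
  induction p with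
  | var m =>
    intro q q' n h
    by_cases hm : m = n
    · simp only [Term.subst, if_pos hm]
      exact Relation.ReflTransGen.single h
    · simp only [Term.subst, if_neg hm]
      exact Relation.ReflTransGen.refl
  | const k =>
    intro q q' n h
    exact Relation.ReflTransGen.refl
  | lam t ih =>
    intro q q' n h
    simp only [Term.subst]
    refine rtg_lam (ih _ _ _ ?_)
    obtain ⟨C, r, r', hr, rfl, rfl⟩ := h
    exact step_lift hsub C r r' 0 hr
  | app a b iha ihb =>
    intro q q' n h
    simp only [Term.subst]
    exact Relation.ReflTransGen.trans (rtg_appL _ (iha _ _ n h)) (rtg_appR _ (ihb _ _ n h))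

lemma isHead_appL {C : Ctx K} {s : Term K} (h : (Ctx.appL C s).IsHead) : C.IsSpine := by
  cases h with
  | spine hs => cases hs with | appL _ h => exact h

lemma isHead_lam_inv {C : Ctx K} (h : (Ctx.lam C).IsHead) : C.IsHead := by
  cases h with
  | spine hs => cases hs
  | lam h => exact h

lemma isHead_appR_false {s : Term K} {C : Ctx K} (h : (Ctx.appR s C).IsHead) : False := by
  cases h with
  | spine hs => cases hs

lemma key_swap (hsub : Substitutive Rg) {r r' : Term K} (hr : Rg r r') :
    ∀ (C : Ctx K), ¬ C.IsHead → ∀ (H : Ctx K), H.IsHead → ∀ (p q : Term K),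
      C.plug r' = H.plug (Term.app (Term.lam p) q) →
      ∃ (H' : Ctx K) (p₀ q₀ : Term K), (H.IsSpine → H'.IsSpine) ∧ H'.IsHead ∧
        C.plug r = H'.plug (Term.app (Term.lam p₀) q₀) ∧
        Relation.ReflTransGen (Step Rg)
          (H'.plug (Term.subst 0 q₀ p₀)) (H.plug (Term.subst 0 q p)) := by
  intro C
  induction C with
  | hole => intro hC; exact absurd (Ctx.IsHead.spine Ctx.IsSpine.hole) hC
  | appL C' s ih =>
    intro hC H hH p q heq
    cases H with
    | hole =>
      simp only [Ctx.plug] at heq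
      injection heq with h1 h2
      cases C' with
      | hole => exact absurd (Ctx.IsHead.spine (Ctx.IsSpine.appL s Ctx.IsSpine.hole)) hC
      | appL C'' s' => simp only [Ctx.plug] at h1; cases h1
      | appR s' C'' => simp only [Ctx.plug] at h1; cases h1
      | lam C'' =>
        simp only [Ctx.plug] at h1
        injection h1 with hp
        refine ⟨Ctx.hole, C''.plug r, q, fun _ => Ctx.IsSpine.hole,
          Ctx.IsHead.spine Ctx.IsSpine.hole, ?_, ?_⟩
        · simp only [Ctx.plug]; rw [h2]
        · simp only [Ctx.plug]
          rw [← hp]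
          exact Relation.ReflTransGen.single (step_subst hsub C'' r r' 0 q hr)
    | appL H₀ s₀ =>
      have hH₀ : H₀.IsSpine := isHead_appL hH
      simp only [Ctx.plug] at heq
      injection heq with h1 h2
      have hC' : ¬ C'.IsHead := by
        intro h
        cases h with
        | spine hs => exact hC (Ctx.IsHead.spine (Ctx.IsSpine.appL s hs))
        | lam hh =>
          cases hH₀ with
          | hole => simp only [Ctx.plug] at h1; cases h1
          | appL t hs => simp only [Ctx.plug] at h1; cases h1
      obtain ⟨H'', p₀, q₀, hspine, _, heq'', hrtg⟩ :=
        ih hC' H₀ (Ctx.IsHead.spine hH₀) p q h1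
      refine ⟨Ctx.appL H'' s, p₀, q₀, fun _ => Ctx.IsSpine.appL s (hspine hH₀),
        Ctx.IsHead.spine (Ctx.IsSpine.appL s (hspine hH₀)), ?_, ?_⟩
      · simp only [Ctx.plug]; rw [heq'']
      · simp only [Ctx.plug]; rw [h2]; exact rtg_appL _ hrtg
    | appR s₀ H₀ => exact (isHead_appR_false hH).elim
    | lam H₀ => simp only [Ctx.plug] at heq; cases heq
  | appR s C' ih =>
    intro hC H hH p q heq
    cases H with
    | hole =>
      simp only [Ctx.plug] at heq
      injection heq with h1 h2
      refine ⟨Ctx.hole, p, C'.plug r, fun _ => Ctx.IsSpine.hole,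
        Ctx.IsHead.spine Ctx.IsSpine.hole, ?_, ?_⟩
      · simp only [Ctx.plug]; rw [h1]
      · simp only [Ctx.plug]
        rw [← h2]
        exact rtg_subst_arg hsub p _ _ 0 ⟨C', r, r', hr, rfl, rfl⟩
    | appL H₀ s₀ =>
      have hH₀ : H₀.IsSpine := isHead_appL hH
      simp only [Ctx.plug] at heq
      injection heq with h1 h2
      refine ⟨Ctx.appL H₀ (C'.plug r), p, q, fun _ => Ctx.IsSpine.appL _ hH₀,
        Ctx.IsHead.spine (Ctx.IsSpine.appL _ hH₀), ?_, ?_⟩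
      · simp only [Ctx.plug]; rw [h1]
      · simp only [Ctx.plug]
        rw [← h2]
        exact Relation.ReflTransGen.single (Step.appR' _ ⟨C', r, r', hr, rfl, rfl⟩)
    | appR s₀ H₀ => exact (isHead_appR_false hH).elim
    | lam H₀ => simp only [Ctx.plug] at heq; cases heq
  | lam C' ih =>
    intro hC H hH p q heq
    cases H with
    | hole => simp only [Ctx.plug] at heq; cases heq
    | appL H₀ s₀ => simp only [Ctx.plug] at heq; cases heq
    | appR s₀ H₀ => exact (isHead_appR_false hH).elim
    | lam H₀ =>
      have hH₀ : H₀.IsHead := isHead_lam_inv hH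
      simp only [Ctx.plug] at heq
      injection heq with h1
      have hC' : ¬ C'.IsHead := fun h => hC (Ctx.IsHead.lam h)
      obtain ⟨H'', p₀, q₀, _, hhead, heq'', hrtg⟩ := ih hC' H₀ hH₀ p q h1
      refine ⟨Ctx.lam H'', p₀, q₀, ?_, Ctx.IsHead.lam hhead, ?_, rtg_lam hrtg⟩
      · intro hs; cases hs
      · simp only [Ctx.plug]; rw [heq'']

end Aux

/-- Swap with head β: if the root rule ↦γ is substitutive, then
¬h→γ · h→β ⊆ h→β · (→γ)*. -/
theorem swap_with_head_beta {K : Type} (Rg : Term K → Term K → Prop)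
    (hsub : Substitutive Rg) :
    ∀ t u s, NonHeadStep Rg t u → HeadStep BetaRoot u s →
      ∃ v, HeadStep BetaRoot t v ∧ Relation.ReflTransGen (Step Rg) v s := by
  intro t u s hg hb
  obtain ⟨C, r, r', hC, hr, ht, hu⟩ := hg
  obtain ⟨H, rb, rb', hH, hroot, hu', hs⟩ := hb
  obtain ⟨p, q, hrb, hrb'⟩ := hroot
  subst ht hs hrb hrb' hu
  obtain ⟨H', p₀, q₀, _, hhead, heq, hrtg⟩ := key_swap hsub hr C hC H hH p q hu'
  exact ⟨H'.plug (Term.subst 0 q₀ p₀),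
    ⟨H', Term.app (Term.lam p₀) q₀, Term.subst 0 q₀ p₀, hhead, ⟨p₀, q₀, rfl, rfl⟩, heq, rfl⟩,
    hrtg⟩
end

section
/- (Root linear swaps in Λ⊕) In the non-deterministic λ-calculus Λ⊕: (1) if t ¬h→β p and p ↦⊕ q, then there exists u with t ↦⊕ u and u →β= q; (2) if t ¬h→⊕ p and p ↦⊕ q, then there exists u with t ↦⊕ u and u →⊕= q. -/
/-- The non-deterministic choice root rule of Λ⊕: ⊕ t p ↦⊕ t and ⊕ t p ↦⊕ p,
where the constant ⊕ is represented by `Term.const ()`. -/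
def OplusRoot : Term Unit → Term Unit → Prop := fun t s =>
  ∃ p q, t = Term.app (Term.app (Term.const ()) p) q ∧ (s = p ∨ s = q)

theorem swap_aux (root : Term Unit → Term Unit → Prop) :
    ∀ t p q, NonHeadStep root t p → OplusRoot p q →
      ∃ u, OplusRoot t u ∧ Relation.ReflGen (Step root) u q := by
  rintro t p q ⟨C, r, r', hnh, hroot, rfl, rfl⟩ ⟨a, b, heq, hq⟩
  cases C with
  | hole => exact (hnh (.spine .hole)).elim
  | lam C => simp [Ctx.plug] at heq
  | appR s C =>
    simp only [Ctx.plug, Term.app.injEq] at heq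
    obtain ⟨rfl, rfl⟩ := heq
    rcases hq with rfl | rfl
    · exact ⟨q, ⟨q, C.plug r, rfl, Or.inl rfl⟩, .refl⟩
    · exact ⟨C.plug r, ⟨a, C.plug r, rfl, Or.inr rfl⟩,
        .single ⟨C, r, r', hroot, rfl, rfl⟩⟩
  | appL C s =>
    simp only [Ctx.plug, Term.app.injEq] at heq
    obtain ⟨heq, rfl⟩ := heq
    cases C with
    | hole => exact (hnh (.spine (.appL _ .hole))).elim
    | lam C => simp [Ctx.plug] at heq
    | appL C s' =>
      simp only [Ctx.plug, Term.app.injEq] at heq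
      obtain ⟨heq, rfl⟩ := heq
      cases C with
      | hole => exact (hnh (.spine (.appL _ (.appL _ .hole)))).elim
      | lam C => simp [Ctx.plug] at heq
      | appL C s'' => simp [Ctx.plug] at heq
      | appR s'' C => simp [Ctx.plug] at heq
    | appR s' C =>
      simp only [Ctx.plug, Term.app.injEq] at heq
      obtain ⟨rfl, rfl⟩ := heq
      rcases hq with rfl | rfl
      · exact ⟨C.plug r, ⟨C.plug r, s, rfl, Or.inl rfl⟩,
          .single ⟨C, r, r', hroot, rfl, rfl⟩⟩
      · exact ⟨q, ⟨C.plug r, q, rfl, Or.inr rfl⟩, .refl⟩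

/-- Root linear swaps in Λ⊕:
(1) if t ¬h→β p and p ↦⊕ q then t ↦⊕ · →β⁼ q;
(2) if t ¬h→⊕ p and p ↦⊕ q then t ↦⊕ · →⊕⁼ q. -/
theorem oplus_root_linear_swaps :
    (∀ t p q, NonHeadStep BetaRoot t p → OplusRoot p q →
      ∃ u, OplusRoot t u ∧ Relation.ReflGen (Step BetaRoot) u q)
    ∧
    (∀ t p q, NonHeadStep OplusRoot t p → OplusRoot p q →
      ∃ u, OplusRoot t u ∧ Relation.ReflGen (Step OplusRoot) u q) := by
  exact ⟨swap_aux BetaRoot, swap_aux OplusRoot⟩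
end

section
/- (Head factorization of Λ⊕, de' Liguoro–Piperno) In the non-deterministic λ-calculus Λ⊕, the reduction →β ∪ →⊕ satisfies head factorization: every reduction sequence t (→β ∪ →⊕)* s can be factorized as t (h→β ∪ h→⊕)* u (¬h→β ∪ ¬h→⊕)* s for some term u. -/
namespace NDFact

open Term

abbrev T := Term Unit

def Root : T → T → Prop := fun a b => BetaRoot a b ∨ OplusRoot a b

/- ### de Bruijn lemmas -/

theorem lift_lift (t : T) : ∀ c c', c ≤ c' →
    lift c (lift c' t) = lift (c' + 1) (lift c t) := by
  induction t with
  | var m =>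
    intro c c' h; simp only [lift]
    split_ifs <;> (try simp only [lift]) <;> (try split_ifs) <;>
      first | rfl | (exfalso; omega) | (congr 1; omega)
  | const k => intros; rfl
  | lam t ih => intro c c' h; simp only [lift, ih (c+1) (c'+1) (by omega)]
  | app t s iht ihs => intro c c' h; simp only [lift, iht _ _ h, ihs _ _ h]

theorem lift_subst_le (t : T) : ∀ n c (q : T), n ≤ c →
    lift c (subst n q t) = subst n (lift c q) (lift (c + 1) t) := by
  induction t with
  | var m =>
    intro n c q h; simp only [subst, lift]
    split_ifs <;> (try simp only [lift, subst]) <;> (try split_ifs) <;>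
      first | rfl | (exfalso; omega) | (congr 1; omega)
  | const k => intros; rfl
  | lam t ih =>
    intro n c q h
    simp only [subst, lift, ih (n+1) (c+1) _ (by omega), lift_lift q 0 c (by omega)]
  | app t s iht ihs => intro n c q h; simp only [subst, lift, iht _ _ _ h, ihs _ _ _ h]

theorem lift_subst_ge (t : T) : ∀ n c (q : T), c ≤ n →
    lift c (subst n q t) = subst (n + 1) (lift c q) (lift c t) := by
  induction t with
  | var m =>
    intro n c q h; simp only [subst, lift]
    split_ifs <;> (try simp only [lift, subst]) <;> (try split_ifs) <;>
      first | rfl | (exfalso; omega) | (congr 1; omega)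
  | const k => intros; rfl
  | lam t ih =>
    intro n c q h
    simp only [subst, lift, ih (n+1) (c+1) _ (by omega), lift_lift q 0 c (by omega)]
  | app t s iht ihs => intro n c q h; simp only [subst, lift, iht _ _ _ h, ihs _ _ _ h]

theorem subst_lift (t : T) : ∀ n (u : T), subst n u (lift n t) = t := by
  induction t with
  | var m =>
    intro n u; simp only [lift]
    split_ifs <;> simp only [subst] <;> split_ifs <;>
      first | rfl | (exfalso; omega) | (congr 1; omega)
  | const k => intros; rfl
  | lam t ih => intro n u; simp only [lift, subst, ih]
  | app t s iht ihs => intro n u; simp only [lift, subst, iht, ihs]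

theorem subst_subst (t : T) : ∀ m n (q r : T), m ≤ n →
    subst n q (subst m r t) =
      subst m (subst n q r) (subst (n + 1) (lift m q) t) := by
  induction t with
  | var k =>
    intro m n q r h
    rcases Nat.lt_trichotomy k m with hkm | rfl | hmk
    · have e1 : subst m r (var k : T) = var k := by
        simp only [subst]; rw [if_neg (by omega), if_neg (by omega)]
      have e2 : subst (n+1) (lift m q) (var k : T) = var k := by
        simp only [subst]; rw [if_neg (by omega), if_neg (by omega)]
      rw [e1, e2]
      simp only [subst]
      rw [if_neg (by omega), if_neg (by omega), if_neg (by omega), if_neg (by omega)]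
    · have e1 : subst k r (var k : T) = r := by simp [subst]
      have e2 : subst (n+1) (lift k q) (var k : T) = var k := by
        simp only [subst]; rw [if_neg (by omega), if_neg (by omega)]
      rw [e1, e2]
      simp [subst]
    · have e1 : subst m r (var k : T) = var (k-1) := by
        simp only [subst]; rw [if_neg (by omega), if_pos (by omega)]
      rw [e1]
      rcases Nat.lt_trichotomy (k-1) n with h2 | h2 | h2
      · have e2 : subst (n+1) (lift m q) (var k : T) = var k := by
          simp only [subst]; rw [if_neg (by omega), if_neg (by omega)]
        rw [e2]
        simp only [subst]
        rw [if_neg (by omega), if_neg (by omega), if_neg (by omega), if_pos (by omega)]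
      · have e2 : subst (n+1) (lift m q) (var k : T) = lift m q := by
          simp only [subst]; rw [if_pos (by omega)]
        rw [e2, subst_lift]
        simp only [subst]
        rw [if_pos (by omega)]
      · have e2 : subst (n+1) (lift m q) (var k : T) = var (k-1) := by
          simp only [subst]; rw [if_neg (by omega), if_pos (by omega)]
        rw [e2]
        simp only [subst]
        rw [if_neg (by omega), if_pos (by omega), if_neg (by omega), if_pos (by omega)]
  | const k => intros; rfl
  | lam t ih =>
    intro m n q r h
    simp only [subst, ih (m+1) (n+1) _ _ (by omega)]
    rw [lift_subst_ge r n 0 q (by omega), lift_lift q 0 m (by omega)]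
  | app t s iht ihs =>
    intro m n q r h; simp only [subst, iht _ _ _ _ h, ihs _ _ _ _ h]

end NDFact
namespace NDFact

/- ### Parallel reduction and its internal variants -/

/-- Parallel reduction for Λ⊕. -/
inductive Par : T → T → Prop
  | var (n : ℕ) : Par (Term.var n) (Term.var n)
  | const (k : Unit) : Par (Term.const k) (Term.const k)
  | lam {t t'} : Par t t' → Par (Term.lam t) (Term.lam t')
  | app {t t' s s'} : Par t t' → Par s s' → Par (Term.app t s) (Term.app t' s')
  | beta {p p' q q'} : Par p p' → Par q q' →
      Par (Term.app (Term.lam p) q) (Term.subst 0 q' p')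
  | opl {p p'} (q : T) : Par p p' →
      Par (Term.app (Term.app (Term.const ()) p) q) p'
  | opr (p : T) {q q'} : Par q q' →
      Par (Term.app (Term.app (Term.const ()) p) q) q'

/-- Parallel reduction internal to the left part of an application
(no redex on the spine through the hole is fired). -/
inductive APar : T → T → Prop
  | var (n : ℕ) : APar (Term.var n) (Term.var n)
  | const (k : Unit) : APar (Term.const k) (Term.const k)
  | lam {t t'} : Par t t' → APar (Term.lam t) (Term.lam t')
  | app {t t' s s'} : APar t t' → Par s s' → APar (Term.app t s) (Term.app t' s')

/-- Internal (non-head) parallel reduction. -/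
inductive IPar : T → T → Prop
  | var (n : ℕ) : IPar (Term.var n) (Term.var n)
  | const (k : Unit) : IPar (Term.const k) (Term.const k)
  | lam {t t'} : IPar t t' → IPar (Term.lam t) (Term.lam t')
  | app {t t' s s'} : APar t t' → Par s s' → IPar (Term.app t s) (Term.app t' s')

/-- Spine steps. -/
inductive SpS : T → T → Prop
  | root {r r'} : Root r r' → SpS r r'
  | appL {t t'} (s : T) : SpS t t' → SpS (Term.app t s) (Term.app t' s)

/-- Head steps. -/
inductive HS : T → T → Prop
  | sp {t t'} : SpS t t' → HS t t'
  | lam {t t'} : HS t t' → HS (Term.lam t) (Term.lam t')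

theorem par_refl (t : T) : Par t t := by
  induction t with
  | var n => exact Par.var n
  | const k => exact Par.const k
  | lam t ih => exact Par.lam ih
  | app t s iht ihs => exact Par.app iht ihs

theorem apar_refl (t : T) : APar t t := by
  induction t with
  | var n => exact APar.var n
  | const k => exact APar.const k
  | lam t _ => exact APar.lam (par_refl t)
  | app t s iht _ => exact APar.app iht (par_refl s)

theorem apar_par {t t'} (h : APar t t') : Par t t' := by
  induction h with
  | var n => exact Par.var n
  | const k => exact Par.const k
  | lam h => exact Par.lam h
  | app _ hs ih => exact Par.app ih hs

theorem ipar_par {t t'} (h : IPar t t') : Par t t' := by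
  induction h with
  | var n => exact Par.var n
  | const k => exact Par.const k
  | lam _ ih => exact Par.lam ih
  | app ht hs => exact Par.app (apar_par ht) hs

theorem ipar_apar {t t'} (h : IPar t t') : APar t t' := by
  induction h with
  | var n => exact APar.var n
  | const k => exact APar.const k
  | lam h ih => exact APar.lam (ipar_par h)
  | app ht hs => exact APar.app ht hs

/- ### Lifting and substitution preserve the relations -/

theorem lift_par {t t'} (h : Par t t') : ∀ c, Par (Term.lift c t) (Term.lift c t') := by
  induction h with
  | var n => intro c; simp only [Term.lift]; split <;> apply par_refl
  | const k => intro c; exact Par.const k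
  | lam _ ih => intro c; exact Par.lam (ih (c+1))
  | app _ _ iht ihs => intro c; exact Par.app (iht c) (ihs c)
  | beta hp hq ihp ihq =>
    intro c
    rw [lift_subst_le _ 0 c _ (by omega)]
    exact Par.beta (ihp (c+1)) (ihq c)
  | opl q _ ih => intro c; exact Par.opl _ (ih c)
  | opr p _ ih => intro c; exact Par.opr _ (ih c)

theorem subst_par {t t'} (h : Par t t') :
    ∀ n {q q' : T}, Par q q' → Par (Term.subst n q t) (Term.subst n q' t') := by
  induction h with
  | var m =>
    intro n q q' hq
    simp only [Term.subst]
    split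
    · exact hq
    · split <;> apply par_refl
  | const k => intro n q q' hq; exact Par.const k
  | lam _ ih => intro n q q' hq; exact Par.lam (ih (n+1) (lift_par hq 0))
  | app _ _ iht ihs => intro n q q' hq; exact Par.app (iht n hq) (ihs n hq)
  | beta hp hq ihp ihq =>
    intro n q q' hqq
    simp only [Term.subst]
    rw [subst_subst _ 0 n _ _ (by omega)]
    exact Par.beta (ihp (n+1) (lift_par hqq 0)) (ihq n hqq)
  | opl q _ ih => intro n r r' hr; exact Par.opl _ (ih n hr)
  | opr p _ ih => intro n r r' hr; exact Par.opr _ (ih n hr)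

theorem root_subst {r r'} (h : Root r r') (n : ℕ) (q : T) :
    Root (Term.subst n q r) (Term.subst n q r') := by
  rcases h with ⟨p, a, rfl, rfl⟩ | ⟨p, a, rfl, hpa⟩
  · left
    refine ⟨Term.subst (n+1) (Term.lift 0 q) p, Term.subst n q a, rfl, ?_⟩
    rw [subst_subst _ 0 n _ _ (by omega)]
  · right
    refine ⟨Term.subst n q p, Term.subst n q a, rfl, ?_⟩
    rcases hpa with rfl | rfl
    · left; rfl
    · right; rfl

theorem root_lift {r r'} (h : Root r r') (c : ℕ) :
    Root (Term.lift c r) (Term.lift c r') := by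
  rcases h with ⟨p, a, rfl, rfl⟩ | ⟨p, a, rfl, hpa⟩
  · left
    refine ⟨Term.lift (c+1) p, Term.lift c a, rfl, ?_⟩
    rw [lift_subst_le _ 0 c _ (by omega)]
  · right
    refine ⟨Term.lift c p, Term.lift c a, rfl, ?_⟩
    rcases hpa with rfl | rfl
    · left; rfl
    · right; rfl

theorem lift_sps {t t'} (h : SpS t t') (c : ℕ) : SpS (Term.lift c t) (Term.lift c t') := by
  induction h with
  | root h => exact SpS.root (root_lift h c)
  | appL s _ ih => exact SpS.appL _ ih

theorem lift_hs {t t'} (h : HS t t') : ∀ c, HS (Term.lift c t) (Term.lift c t') := by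
  induction h with
  | sp h => intro c; exact HS.sp (lift_sps h c)
  | lam _ ih => intro c; exact HS.lam (ih (c+1))

theorem lift_apar {t t'} (h : APar t t') : ∀ c, APar (Term.lift c t) (Term.lift c t') := by
  induction h with
  | var n => intro c; simp only [Term.lift]; split <;> apply apar_refl
  | const k => intro c; exact APar.const k
  | lam h => intro c; exact APar.lam (lift_par h (c+1))
  | app _ hs ih => intro c; exact APar.app (ih c) (lift_par hs c)

theorem lift_ipar {t t'} (h : IPar t t') : ∀ c, IPar (Term.lift c t) (Term.lift c t') := by
  induction h with
  | var n => intro c; simp only [Term.lift]; split <;> constructor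
  | const k => intro c; exact IPar.const k
  | lam _ ih => intro c; exact IPar.lam (ih (c+1))
  | app ht hs => intro c; exact IPar.app (lift_apar ht c) (lift_par hs c)

theorem subst_sps {t t'} (h : SpS t t') (n : ℕ) (q : T) :
    SpS (Term.subst n q t) (Term.subst n q t') := by
  induction h with
  | root h => exact SpS.root (root_subst h n q)
  | appL s _ ih => exact SpS.appL _ ih

theorem subst_hs {t t'} (h : HS t t') : ∀ n (q : T), HS (Term.subst n q t) (Term.subst n q t') := by
  induction h with
  | sp h => intro n q; exact HS.sp (subst_sps h n q)
  | lam _ ih => intro n q; exact HS.lam (ih (n+1) (Term.lift 0 q))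

end NDFact
namespace NDFact

open Relation

theorem rtg_map {r s : T → T → Prop} (f : T → T) (hf : ∀ a b, r a b → s (f a) (f b))
    {a b} (h : ReflTransGen r a b) : ReflTransGen s (f a) (f b) := by
  induction h with
  | refl => exact ReflTransGen.refl
  | tail _ h2 ih => exact ih.tail (hf _ _ h2)

/- ### Splitting substituted parallel reductions -/

theorem split_subst_apar {p p'} (hp : APar p p') :
    ∀ n {q q' q1 : T}, Par q q' → ReflTransGen SpS q q1 → APar q1 q' →
      ∃ w, ReflTransGen SpS (Term.subst n q p) w ∧ APar w (Term.subst n q' p') := by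
  induction hp with
  | var m =>
    intro n q q' q1 hq hqs hq1
    by_cases hmn : m = n
    · subst hmn
      simp only [Term.subst, if_pos rfl]
      exact ⟨q1, hqs, hq1⟩
    · simp only [Term.subst, if_neg hmn]
      split <;> exact ⟨_, ReflTransGen.refl, apar_refl _⟩
  | const k => intro n q q' q1 hq hqs hq1; exact ⟨_, ReflTransGen.refl, APar.const k⟩
  | lam h =>
    intro n q q' q1 hq hqs hq1
    exact ⟨_, ReflTransGen.refl, APar.lam (subst_par h (n+1) (lift_par hq 0))⟩
  | @app f f' a a' ht hs ih =>
    intro n q q' q1 hq hqs hq1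
    obtain ⟨w1, st1, hw1⟩ := ih n hq hqs hq1
    exact ⟨_, rtg_map (fun x => Term.app x (Term.subst n q a))
      (fun _ _ h => SpS.appL _ h) st1, APar.app hw1 (subst_par hs n hq)⟩

theorem split_subst_ipar {p p'} (hp : IPar p p') :
    ∀ n {q q' : T}, Par q q' →
      (∃ q1, ReflTransGen SpS q q1 ∧ APar q1 q') →
      (∃ q2, ReflTransGen HS q q2 ∧ IPar q2 q') →
      ∃ w, ReflTransGen HS (Term.subst n q p) w ∧ IPar w (Term.subst n q' p') := by
  induction hp with
  | var m =>
    intro n q q' hq h1 h2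
    by_cases hmn : m = n
    · subst hmn
      simp only [Term.subst, if_pos rfl]
      exact h2
    · simp only [Term.subst, if_neg hmn]
      split <;> exact ⟨_, ReflTransGen.refl, by constructor⟩
  | const k => intro n q q' hq h1 h2; exact ⟨_, ReflTransGen.refl, IPar.const k⟩
  | lam h ih =>
    intro n q q' hq h1 h2
    obtain ⟨q1, st1, hq1⟩ := h1
    obtain ⟨q2, st2, hq2⟩ := h2
    obtain ⟨w, st, hw⟩ := ih (n+1) (lift_par hq 0)
      ⟨_, rtg_map (Term.lift 0) (fun _ _ h => lift_sps h 0) st1, lift_apar hq1 0⟩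
      ⟨_, rtg_map (Term.lift 0) (fun _ _ h => lift_hs h 0) st2, lift_ipar hq2 0⟩
    exact ⟨_, rtg_map Term.lam (fun _ _ h => HS.lam h) st, IPar.lam hw⟩
  | @app f f' a a' ht hs =>
    intro n q q' hq h1 h2
    obtain ⟨q1, st1, hq1⟩ := h1
    obtain ⟨w1, st, hw1⟩ := split_subst_apar ht n hq st1 hq1
    exact ⟨_, rtg_map (fun x => Term.app x (Term.subst n q a))
      (fun _ _ h => HS.sp (SpS.appL _ h)) st, IPar.app hw1 (subst_par hs n hq)⟩

/- ### The split lemma: `⇒  ⊆  h→* · ⇒ᵢ` (and its spine version) -/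

theorem split {t t'} (h : Par t t') :
    (∃ w, ReflTransGen SpS t w ∧ APar w t') ∧
    (∃ w, ReflTransGen HS t w ∧ IPar w t') := by
  induction h with
  | var n => exact ⟨⟨_, ReflTransGen.refl, APar.var n⟩, ⟨_, ReflTransGen.refl, IPar.var n⟩⟩
  | const k => exact ⟨⟨_, ReflTransGen.refl, APar.const k⟩, ⟨_, ReflTransGen.refl, IPar.const k⟩⟩
  | lam h ih =>
    obtain ⟨w, st, hw⟩ := ih.2
    exact ⟨⟨_, ReflTransGen.refl, APar.lam h⟩,
      ⟨_, rtg_map Term.lam (fun _ _ h => HS.lam h) st, IPar.lam hw⟩⟩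
  | @app f f' a a' ht hs iht ihs =>
    obtain ⟨w, st, hw⟩ := iht.1
    exact ⟨⟨_, rtg_map (fun x => Term.app x a) (fun _ _ h => SpS.appL _ h) st,
        APar.app hw hs⟩,
      ⟨_, rtg_map (fun x => Term.app x a) (fun _ _ h => HS.sp (SpS.appL _ h)) st,
        IPar.app hw hs⟩⟩
  | @beta p p' q q' hp hq ihp ihq =>
    have root1 : SpS (Term.app (Term.lam p) q) (Term.subst 0 q p) :=
      SpS.root (Or.inl ⟨p, q, rfl, rfl⟩)
    constructor
    · obtain ⟨p1, pst, hp1⟩ := ihp.1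
      obtain ⟨q1, qst, hq1⟩ := ihq.1
      obtain ⟨w, wst, hw⟩ := split_subst_apar hp1 0 hq qst hq1
      refine ⟨w, ?_, hw⟩
      exact ((ReflTransGen.single root1).trans
        (rtg_map (Term.subst 0 q) (fun _ _ h => subst_sps h 0 q) pst)).trans wst
    · obtain ⟨p2, pst, hp2⟩ := ihp.2
      obtain ⟨w, wst, hw⟩ := split_subst_ipar hp2 0 hq ihq.1 ihq.2
      refine ⟨w, ?_, hw⟩
      exact ((ReflTransGen.single (HS.sp root1)).trans
        (rtg_map (Term.subst 0 q) (fun _ _ h => subst_hs h 0 q) pst)).trans wst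
  | @opl p p' q hp ihp =>
    have root1 : SpS (Term.app (Term.app (Term.const ()) p) q) p :=
      SpS.root (Or.inr ⟨p, q, rfl, Or.inl rfl⟩)
    obtain ⟨w1, st1, hw1⟩ := ihp.1
    obtain ⟨w2, st2, hw2⟩ := ihp.2
    exact ⟨⟨w1, (ReflTransGen.single root1).trans st1, hw1⟩,
      ⟨w2, (ReflTransGen.single (HS.sp root1)).trans st2, hw2⟩⟩
  | @opr p q q' hq ihq =>
    have root1 : SpS (Term.app (Term.app (Term.const ()) p) q) q :=
      SpS.root (Or.inr ⟨p, q, rfl, Or.inr rfl⟩)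
    obtain ⟨w1, st1, hw1⟩ := ihq.1
    obtain ⟨w2, st2, hw2⟩ := ihq.2
    exact ⟨⟨w1, (ReflTransGen.single root1).trans st1, hw1⟩,
      ⟨w2, (ReflTransGen.single (HS.sp root1)).trans st2, hw2⟩⟩

/- ### Key commutation: internal parallel steps before a head step -/

theorem key_apar {t u} (h : APar t u) : ∀ {s}, SpS u s → ∃ v, SpS t v ∧ Par v s := by
  induction h with
  | var n =>
    intro s hs
    cases hs with
    | root h => rcases h with ⟨p, a, h, _⟩ | ⟨p, a, h, _⟩ <;> cases h
  | const k =>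
    intro s hs
    cases hs with
    | root h => rcases h with ⟨p, a, h, _⟩ | ⟨p, a, h, _⟩ <;> cases h
  | lam hpar =>
    intro s hs
    cases hs with
    | root h => rcases h with ⟨p, a, h, _⟩ | ⟨p, a, h, _⟩ <;> cases h
  | @app f f' a a' ht hs ih =>
    intro s hstep
    cases hstep with
    | appL s2 h =>
      obtain ⟨v, hv, hpv⟩ := ih h
      exact ⟨_, SpS.appL _ hv, Par.app hpv hs⟩
    | root h =>
      rcases h with ⟨p', b, heq, rfl⟩ | ⟨p', b, heq, hor⟩
      · obtain ⟨rfl, rfl⟩ : f' = Term.lam p' ∧ a' = b := by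
          cases heq; exact ⟨rfl, rfl⟩
        cases ht with
        | lam hpp =>
          exact ⟨_, SpS.root (Or.inl ⟨_, _, rfl, rfl⟩), subst_par hpp 0 hs⟩
      · obtain ⟨rfl, rfl⟩ : f' = Term.app (Term.const ()) p' ∧ a' = b := by
          cases heq; exact ⟨rfl, rfl⟩
        cases ht with
        | app hc hp =>
          cases hc with
          | const k =>
            rcases hor with rfl | rfl
            · exact ⟨_, SpS.root (Or.inr ⟨_, _, rfl, Or.inl rfl⟩), hp⟩
            · exact ⟨_, SpS.root (Or.inr ⟨_, _, rfl, Or.inr rfl⟩), hs⟩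

theorem key_ipar {t u} (h : IPar t u) : ∀ {s}, HS u s → ∃ v, HS t v ∧ Par v s := by
  induction h with
  | var n =>
    intro s hs
    cases hs with
    | sp h => cases h with
      | root h => rcases h with ⟨p, a, h, _⟩ | ⟨p, a, h, _⟩ <;> cases h
  | const k =>
    intro s hs
    cases hs with
    | sp h => cases h with
      | root h => rcases h with ⟨p, a, h, _⟩ | ⟨p, a, h, _⟩ <;> cases h
  | lam h ih =>
    intro s hs
    cases hs with
    | sp h2 => cases h2 with
      | root h3 => rcases h3 with ⟨p, a, h3, _⟩ | ⟨p, a, h3, _⟩ <;> cases h3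
    | lam h2 =>
      obtain ⟨v, hv, pv⟩ := ih h2
      exact ⟨_, HS.lam hv, Par.lam pv⟩
  | app ht hs =>
    intro s2 hstep
    cases hstep with
    | sp h2 =>
      obtain ⟨v, hv, pv⟩ := key_apar (APar.app ht hs) h2
      exact ⟨v, HS.sp hv, pv⟩

end NDFact
namespace NDFact

open Relation

/- ### Contexts vs the inductive step relations -/

theorem root_par {r r'} (h : Root r r') : Par r r' := by
  rcases h with ⟨p, a, rfl, rfl⟩ | ⟨p, a, rfl, hpa⟩
  · exact Par.beta (par_refl p) (par_refl a)
  · rcases hpa with rfl | rfl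
    · exact Par.opl _ (par_refl _)
    · exact Par.opr _ (par_refl _)

theorem plug_par {r r'} (h : Par r r') : ∀ C : Ctx Unit, Par (C.plug r) (C.plug r') := by
  intro C
  induction C with
  | hole => exact h
  | appL C s ih => exact Par.app ih (par_refl s)
  | appR s C ih => exact Par.app (par_refl s) ih
  | lam C ih => exact Par.lam ih

theorem isSpine_appL_inv {C : Ctx Unit} {s} (h : (Ctx.appL C s).IsSpine) : C.IsSpine := by
  cases h with
  | appL _ h => exact h

theorem isHead_lam_inv {C : Ctx Unit} (h : (Ctx.lam C).IsHead) : C.IsHead := by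
  cases h with
  | spine h => cases h
  | lam h => exact h

theorem isHead_appL_inv {C : Ctx Unit} {s} (h : (Ctx.appL C s).IsHead) : C.IsSpine := by
  cases h with
  | spine h => exact isSpine_appL_inv h

theorem not_isHead_appR {t : Term Unit} {C : Ctx Unit} : ¬ (Ctx.appR t C).IsHead := by
  intro h
  cases h with
  | spine h => cases h

theorem spinectx_sps {r r'} (h : Root r r') :
    ∀ {C : Ctx Unit}, C.IsSpine → SpS (C.plug r) (C.plug r') := by
  intro C hC
  induction hC with
  | hole => exact SpS.root h
  | appL t _ ih => exact SpS.appL _ ih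

theorem ctx_to_HS {r r'} (h : Root r r') :
    ∀ {C : Ctx Unit}, C.IsHead → HS (C.plug r) (C.plug r') := by
  intro C hC
  induction hC with
  | spine hsp => exact HS.sp (spinectx_sps h hsp)
  | lam _ ih => exact HS.lam ih

theorem nsp_apar {r r'} (h : Root r r') :
    ∀ C : Ctx Unit, ¬ C.IsSpine → APar (C.plug r) (C.plug r') := by
  intro C
  induction C with
  | hole => intro hC; exact absurd Ctx.IsSpine.hole hC
  | appL C s ih =>
    intro hC
    exact APar.app (ih (fun hs => hC (hs.appL s))) (par_refl s)
  | appR s C _ =>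
    intro _
    exact APar.app (apar_refl s) (plug_par (root_par h) C)
  | lam C _ =>
    intro _
    exact APar.lam (plug_par (root_par h) C)

theorem nhctx_ipar {r r'} (h : Root r r') :
    ∀ C : Ctx Unit, ¬ C.IsHead → IPar (C.plug r) (C.plug r') := by
  intro C
  induction C with
  | hole => intro hC; exact absurd (Ctx.IsHead.spine Ctx.IsSpine.hole) hC
  | appL C s _ =>
    intro hC
    exact IPar.app (nsp_apar h C (fun hs => hC (Ctx.IsHead.spine (hs.appL s)))) (par_refl s)
  | appR s C _ =>
    intro _
    exact IPar.app (apar_refl s) (plug_par (root_par h) C)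
  | lam C ih =>
    intro hC
    exact IPar.lam (ih (fun hh => hC hh.lam))

/- ### Back to existential (context-based) steps -/

theorem sps_exists {t s} (h : SpS t s) :
    ∃ (C : Ctx Unit) (r r' : Term Unit),
      C.IsSpine ∧ Root r r' ∧ t = C.plug r ∧ s = C.plug r' := by
  induction h with
  | @root r r' h => exact ⟨Ctx.hole, r, r', Ctx.IsSpine.hole, h, rfl, rfl⟩
  | appL a _ ih =>
    obtain ⟨C, r, r', hC, hr, rfl, rfl⟩ := ih
    exact ⟨Ctx.appL C a, r, r', hC.appL a, hr, rfl, rfl⟩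

theorem hs_exists {t s} (h : HS t s) :
    ∃ (C : Ctx Unit) (r r' : Term Unit),
      C.IsHead ∧ Root r r' ∧ t = C.plug r ∧ s = C.plug r' := by
  induction h with
  | sp h =>
    obtain ⟨C, r, r', hC, hr, rfl, rfl⟩ := sps_exists h
    exact ⟨C, r, r', Ctx.IsHead.spine hC, hr, rfl, rfl⟩
  | lam _ ih =>
    obtain ⟨C, r, r', hC, hr, rfl, rfl⟩ := ih
    exact ⟨Ctx.lam C, r, r', hC.lam, hr, rfl, rfl⟩

/-- The target head-step relation. -/
def HRel : T → T → Prop := fun a b => HeadStep BetaRoot a b ∨ HeadStep OplusRoot a b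

/-- The target non-head-step relation. -/
def NRel : T → T → Prop := fun a b => NonHeadStep BetaRoot a b ∨ NonHeadStep OplusRoot a b

theorem hs_hrel {t s} (h : HS t s) : HRel t s := by
  obtain ⟨C, r, r', hC, hr, rfl, rfl⟩ := hs_exists h
  rcases hr with hb | ho
  · exact Or.inl ⟨C, r, r', hC, hb, rfl, rfl⟩
  · exact Or.inr ⟨C, r, r', hC, ho, rfl, rfl⟩

theorem mk_nrel {C : Ctx Unit} (hC : ¬ C.IsHead) {r r'} (h : Root r r') :
    NRel (C.plug r) (C.plug r') := by
  rcases h with hb | ho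
  · exact Or.inl ⟨C, r, r', hC, hb, rfl, rfl⟩
  · exact Or.inr ⟨C, r, r', hC, ho, rfl, rfl⟩

/- ### Parallel steps as sequences of plain steps -/

theorem par_to_steps {t t'} (h : Par t t') : ReflTransGen (Step Root) t t' := by
  induction h with
  | var n => exact ReflTransGen.refl
  | const k => exact ReflTransGen.refl
  | lam _ ih =>
    exact rtg_map Term.lam
      (fun a b h => by
        obtain ⟨C, r, r', hr, rfl, rfl⟩ := h
        exact ⟨Ctx.lam C, r, r', hr, rfl, rfl⟩) ih
  | @app f f' a a' _ _ iht ihs =>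
    refine ReflTransGen.trans
      (rtg_map (fun x => Term.app x a) (fun u v h => ?_) iht)
      (rtg_map (fun x => Term.app f' x) (fun u v h => ?_) ihs)
    · obtain ⟨C, r, r', hr, rfl, rfl⟩ := h
      exact ⟨Ctx.appL C a, r, r', hr, rfl, rfl⟩
    · obtain ⟨C, r, r', hr, rfl, rfl⟩ := h
      exact ⟨Ctx.appR f' C, r, r', hr, rfl, rfl⟩
  | @beta p p' q q' _ _ ihp ihq =>
    refine ReflTransGen.tail (ReflTransGen.trans
      (rtg_map (fun x => Term.app (Term.lam x) q) (fun u v h => ?_) ihp)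
      (rtg_map (fun x => Term.app (Term.lam p') x) (fun u v h => ?_) ihq)) ?_
    · obtain ⟨C, r, r', hr, rfl, rfl⟩ := h
      exact ⟨Ctx.appL (Ctx.lam C) q, r, r', hr, rfl, rfl⟩
    · obtain ⟨C, r, r', hr, rfl, rfl⟩ := h
      exact ⟨Ctx.appR (Term.lam p') C, r, r', hr, rfl, rfl⟩
    · exact ⟨Ctx.hole, _, _, Or.inl ⟨p', q', rfl, rfl⟩, rfl, rfl⟩
  | @opl p p' q _ ih =>
    exact ReflTransGen.head ⟨Ctx.hole, _, _, Or.inr ⟨p, q, rfl, Or.inl rfl⟩, rfl, rfl⟩ ih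
  | @opr p q q' _ ih =>
    exact ReflTransGen.head ⟨Ctx.hole, _, _, Or.inr ⟨p, q, rfl, Or.inr rfl⟩, rfl, rfl⟩ ih

/-- Non-spine-context steps. -/
def NSp : T → T → Prop := fun a b =>
  ∃ (C : Ctx Unit) (r r' : Term Unit), ¬ C.IsSpine ∧ Root r r' ∧ a = C.plug r ∧ b = C.plug r'

theorem not_isSpine_lam {C : Ctx Unit} : ¬ (Ctx.lam C).IsSpine := fun h => by cases h

theorem not_isSpine_appR {t : Term Unit} {C : Ctx Unit} : ¬ (Ctx.appR t C).IsSpine :=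
  fun h => by cases h

theorem apar_to_nsp {t t'} (h : APar t t') : ReflTransGen NSp t t' := by
  induction h with
  | var n => exact ReflTransGen.refl
  | const k => exact ReflTransGen.refl
  | @lam b b' hb =>
    refine rtg_map Term.lam (fun u v h => ?_) (par_to_steps hb)
    obtain ⟨C, r, r', hr, rfl, rfl⟩ := h
    exact ⟨Ctx.lam C, r, r', not_isSpine_lam, hr, rfl, rfl⟩
  | @app f f' a a' _ hs ih =>
    refine ReflTransGen.trans
      (rtg_map (fun x => Term.app x a) (fun u v h => ?_) ih)
      (rtg_map (fun x => Term.app f' x) (fun u v h => ?_) (par_to_steps hs))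
    · obtain ⟨C, r, r', hC, hr, rfl, rfl⟩ := h
      exact ⟨Ctx.appL C a, r, r', fun hs => hC (isSpine_appL_inv hs), hr, rfl, rfl⟩
    · obtain ⟨C, r, r', hr, rfl, rfl⟩ := h
      exact ⟨Ctx.appR f' C, r, r', not_isSpine_appR, hr, rfl, rfl⟩

theorem ipar_to_nrel {t t'} (h : IPar t t') : ReflTransGen NRel t t' := by
  induction h with
  | var n => exact ReflTransGen.refl
  | const k => exact ReflTransGen.refl
  | lam _ ih =>
    refine rtg_map Term.lam (fun u v h => ?_) ih
    rcases h with ⟨C, r, r', hC, hr, rfl, rfl⟩ | ⟨C, r, r', hC, hr, rfl, rfl⟩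
    · exact Or.inl ⟨Ctx.lam C, r, r', fun hh => hC (isHead_lam_inv hh), hr, rfl, rfl⟩
    · exact Or.inr ⟨Ctx.lam C, r, r', fun hh => hC (isHead_lam_inv hh), hr, rfl, rfl⟩
  | @app f f' a a' ht hs =>
    refine ReflTransGen.trans
      (rtg_map (fun x => Term.app x a) (fun u v h => ?_) (apar_to_nsp ht))
      (rtg_map (fun x => Term.app f' x) (fun u v h => ?_) (par_to_steps hs))
    · obtain ⟨C, r, r', hC, hr, rfl, rfl⟩ := h
      have : ¬ (Ctx.appL C a).IsHead := fun hh => hC (isHead_appL_inv hh)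
      exact mk_nrel this hr
    · obtain ⟨C, r, r', hr, rfl, rfl⟩ := h
      exact mk_nrel (not_isHead_appR) hr

/- ### Postponement -/

theorem swap_many {u w} (h : ReflTransGen HS u w) :
    ∀ {t}, IPar t u → ∃ y, ReflTransGen HS t y ∧ IPar y w := by
  induction h using Relation.ReflTransGen.head_induction_on with
  | refl => intro t ht; exact ⟨t, ReflTransGen.refl, ht⟩
  | head h1 _ ih =>
    intro t ht
    obtain ⟨v, hv, pv⟩ := key_ipar ht h1
    obtain ⟨v2, vst, hv2⟩ := (split pv).2
    obtain ⟨y, yst, hy⟩ := ih hv2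
    exact ⟨y, ((ReflTransGen.single hv).trans vst).trans yst, hy⟩

theorem swap_star {u s'} (hi : ReflTransGen IPar u s') {w} (hh : ReflTransGen HS s' w) :
    ∃ x, ReflTransGen HS u x ∧ ReflTransGen IPar x w := by
  induction hi using Relation.ReflTransGen.head_induction_on with
  | refl => exact ⟨w, hh, ReflTransGen.refl⟩
  | head h1 _ ih =>
    obtain ⟨x, xst, xi⟩ := ih
    obtain ⟨y, yst, hy⟩ := swap_many xst h1
    exact ⟨y, yst, ReflTransGen.head hy xi⟩

theorem main_aux {t s} (h : ReflTransGen (Step Root) t s) :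
    ∃ u, ReflTransGen HS t u ∧ ReflTransGen IPar u s := by
  induction h with
  | refl => exact ⟨t, ReflTransGen.refl, ReflTransGen.refl⟩
  | tail _ h2 ih =>
    obtain ⟨u, hu, hi⟩ := ih
    obtain ⟨C, r, r', hroot, rfl, rfl⟩ := h2
    by_cases hC : C.IsHead
    · obtain ⟨x, xst, xi⟩ := swap_star hi (ReflTransGen.single (ctx_to_HS hroot hC))
      exact ⟨x, hu.trans xst, xi⟩
    · exact ⟨u, hu, hi.tail (nhctx_ipar hroot C hC)⟩

theorem rtg_bind {r s : T → T → Prop} (h : ∀ a b, r a b → ReflTransGen s a b)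
    {a b} (hr : ReflTransGen r a b) : ReflTransGen s a b := by
  induction hr with
  | refl => exact ReflTransGen.refl
  | tail _ h2 ih => exact ih.trans (h _ _ h2)

end NDFact
/-- Head factorization for the non-deterministic λ-calculus Λ⊕ (de' Liguoro–Piperno):
every (→β ∪ →⊕)-reduction sequence factorizes as head steps followed by
non-head steps. -/
theorem head_factorization_lambda_oplus :
    ∀ t s : Term Unit,
      Relation.ReflTransGen (fun a b => Step BetaRoot a b ∨ Step OplusRoot a b) t s →
      ∃ u, Relation.ReflTransGen
          (fun a b => HeadStep BetaRoot a b ∨ HeadStep OplusRoot a b) t u ∧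
        Relation.ReflTransGen
          (fun a b => NonHeadStep BetaRoot a b ∨ NonHeadStep OplusRoot a b) u s := by
  intro t s h
  have h' : Relation.ReflTransGen (Step NDFact.Root) t s := by
    refine Relation.ReflTransGen.mono ?_ t s h
    intro a b hab
    rcases hab with ⟨C, r, r', hr, rfl, rfl⟩ | ⟨C, r, r', hr, rfl, rfl⟩
    · exact ⟨C, r, r', Or.inl hr, rfl, rfl⟩
    · exact ⟨C, r, r', Or.inr hr, rfl, rfl⟩
  obtain ⟨u, hu, hi⟩ := NDFact.main_aux h'
  refine ⟨u, Relation.ReflTransGen.mono (fun a b h => NDFact.hs_hrel h) t u hu, ?_⟩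
  exact NDFact.rtg_bind (fun a b h => NDFact.ipar_to_nrel h) hi
end

section
/- (Left factorization of the shuffling calculus) In the shuffling calculus, whose reduction is →sh = →βv ∪ →σ with →σ = →σ1 ∪ →σ3, left factorization holds: every reduction sequence t (→sh)* s can be factorized as t (l→sh)* u (¬l→sh)* s, where l→sh is the union of the left βv-, σ1- and σ3-steps and ¬l→sh the union of the corresponding non-left steps. The same holds with left steps replaced by weak steps (weak factorization). -/
/-- Pure λ-terms (no constants). -/
abbrev PTerm : Type := Term Empty

/-- The σ1 root rule: (λx.t)u s ↦σ1 (λx.t s)u with x ∉ fv(s)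
(in de Bruijn representation the side condition is realized by lifting s). -/
def Sigma1Root : PTerm → PTerm → Prop := fun a b =>
  ∃ t u s, a = Term.app (Term.app (Term.lam t) u) s ∧
    b = Term.app (Term.lam (Term.app t (Term.lift 0 s))) u

/-- The σ3 root rule: v ((λx.t)u) ↦σ3 (λx.v t)u with v a value and x ∉ fv(v)
(in de Bruijn representation the side condition is realized by lifting v). -/
def Sigma3Root : PTerm → PTerm → Prop := fun a b =>
  ∃ v t u, v.IsValue ∧ a = Term.app v (Term.app (Term.lam t) u) ∧
    b = Term.app (Term.lam (Term.app (Term.lift 0 v) t)) u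

namespace Fact

open Term Relation

variable {K : Type}

theorem lift_lift (t : Term K) : ∀ b c, b ≤ c →
    lift (c+1) (lift b t) = lift b (lift c t) := by
  induction t with
  | var m =>
    intro b c h
    simp only [lift]
    split_ifs <;> (try simp only [lift]) <;> (try split_ifs) <;>
      first
      | rfl
      | (exfalso; omega)
      | (exact congrArg Term.var (by omega))
  | const k => intro b c h; rfl
  | lam t ih => intro b c h; simp only [lift, ih (b+1) (c+1) (by omega)]
  | app t s iht ihs => intro b c h; simp only [lift, iht _ _ h, ihs _ _ h]

theorem lift_subst_low (t : Term K) : ∀ u n c, c ≤ n →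
    lift c (subst n u t) = subst (n+1) (lift c u) (lift c t) := by
  induction t with
  | var m =>
    intro u n c h
    simp only [subst, lift]
    split_ifs <;> (try simp only [subst, lift]) <;> (try split_ifs) <;>
      first
      | rfl
      | (exfalso; omega)
      | (exact congrArg Term.var (by omega))
  | const k => intro u n c h; rfl
  | lam t ih =>
    intro u n c h
    simp only [subst, lift, ih (lift 0 u) (n+1) (c+1) (by omega),
      lift_lift u 0 c (by omega)]
  | app t s iht ihs => intro u n c h; simp only [subst, lift, iht _ _ _ h, ihs _ _ _ h]

theorem lift_subst_high (t : Term K) : ∀ u n c, n ≤ c →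
    lift c (subst n u t) = subst n (lift c u) (lift (c+1) t) := by
  induction t with
  | var m =>
    intro u n c h
    simp only [subst, lift]
    split_ifs <;> (try simp only [subst, lift]) <;> (try split_ifs) <;>
      first
      | rfl
      | (exfalso; omega)
      | (exact congrArg Term.var (by omega))
  | const k => intro u n c h; rfl
  | lam t ih =>
    intro u n c h
    simp only [subst, lift, ih (lift 0 u) (n+1) (c+1) (by omega),
      lift_lift u 0 c (by omega)]
  | app t s iht ihs => intro u n c h; simp only [subst, lift, iht _ _ _ h, ihs _ _ _ h]

theorem subst_lift_cancel (t : Term K) : ∀ u n, subst n u (lift n t) = t := by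
  induction t with
  | var m =>
    intro u n
    simp only [lift]
    split_ifs <;> (try simp only [subst]) <;> (try split_ifs) <;>
      first
      | rfl
      | (exfalso; omega)
      | (exact congrArg Term.var (by omega))
  | const k => intro u n; rfl
  | lam t ih => intro u n; simp only [lift, subst, ih]
  | app t s iht ihs => intro u n; simp only [lift, subst, iht, ihs]

theorem subst_subst (t : Term K) : ∀ u v m n, m ≤ n →
    subst n u (subst m v t) =
      subst m (subst n u v) (subst (n+1) (lift m u) t) := by
  induction t with
  | var k =>
    intro u v m n h
    simp only [subst]
    split_ifs <;> (try simp only [subst]) <;> (try split_ifs) <;>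
      first
      | rfl
      | (exfalso; omega)
      | (exact congrArg Term.var (by omega))
      | (exact (subst_lift_cancel u (subst n u v) m).symm)
  | const k => intro u v m n h; rfl
  | lam t ih =>
    intro u v m n h
    simp only [subst, ih (lift 0 u) (lift 0 v) (m+1) (n+1) (by omega),
      lift_subst_low v u n 0 (by omega), lift_lift u 0 m (by omega)]
  | app t s iht ihs =>
    intro u v m n h
    simp only [subst, iht _ _ _ _ h, ihs _ _ _ _ h]

-- values
theorem isValue_lift {v : Term K} (h : v.IsValue) (c : ℕ) : (lift c v).IsValue := by
  cases v with
  | var m => simp only [lift]; split <;> trivial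
  | const k => trivial
  | lam t => trivial
  | app a b => exact h.elim

theorem isValue_subst {v u : Term K} (hv : v.IsValue) (hu : u.IsValue) (n : ℕ) :
    (subst n u v).IsValue := by
  cases v with
  | var m => simp only [subst]; split; · exact hu
             split <;> trivial
  | const k => trivial
  | lam t => trivial
  | app a b => exact hv.elim

-- the union of the three root rules
def Root (a b : PTerm) : Prop :=
  BetavRoot a b ∨ Sigma1Root a b ∨ Sigma3Root a b

theorem root_subst {a b : PTerm} (h : Root a b) {u : PTerm} (hu : u.IsValue) (n : ℕ) :
    Root (subst n u a) (subst n u b) := by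
  rcases h with ⟨p, v, hv, rfl, rfl⟩ | ⟨t, w, s, rfl, rfl⟩ | ⟨v, t, w, hv, rfl, rfl⟩
  · exact Or.inl ⟨subst (n+1) (lift 0 u) p, subst n u v, isValue_subst hv hu n,
      rfl, subst_subst p u v 0 n (by omega)⟩
  · refine Or.inr (Or.inl ⟨subst (n+1) (lift 0 u) t, subst n u w, subst n u s, rfl, ?_⟩)
    simp only [subst, lift_subst_low s u n 0 (by omega)]
  · refine Or.inr (Or.inr ⟨subst n u v, subst (n+1) (lift 0 u) t, subst n u w,
      isValue_subst hv hu n, rfl, ?_⟩)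
    simp only [subst, lift_subst_low v u n 0 (by omega)]

theorem root_lift {a b : PTerm} (h : Root a b) (c : ℕ) :
    Root (lift c a) (lift c b) := by
  rcases h with ⟨p, v, hv, rfl, rfl⟩ | ⟨t, w, s, rfl, rfl⟩ | ⟨v, t, w, hv, rfl, rfl⟩
  · exact Or.inl ⟨lift (c+1) p, lift c v, isValue_lift hv c,
      rfl, lift_subst_high p v 0 c (by omega)⟩
  · refine Or.inr (Or.inl ⟨lift (c+1) t, lift c w, lift c s, rfl, ?_⟩)
    simp only [lift, lift_lift s 0 c (by omega)]
  · refine Or.inr (Or.inr ⟨lift c v, lift (c+1) t, lift c w, isValue_lift hv c, rfl, ?_⟩)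
    simp only [lift, lift_lift v 0 c (by omega)]

-- step relations (unions over the three roots), stated to match the theorem
def LS (a b : PTerm) : Prop :=
  LeftStep BetavRoot a b ∨ LeftStep Sigma1Root a b ∨ LeftStep Sigma3Root a b

def NLS (a b : PTerm) : Prop :=
  NonLeftStep BetavRoot a b ∨ NonLeftStep Sigma1Root a b ∨ NonLeftStep Sigma3Root a b

def WS (a b : PTerm) : Prop :=
  WeakStep BetavRoot a b ∨ WeakStep Sigma1Root a b ∨ WeakStep Sigma3Root a b

def NWS (a b : PTerm) : Prop :=
  NonWeakStep BetavRoot a b ∨ NonWeakStep Sigma1Root a b ∨ NonWeakStep Sigma3Root a b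

def FS (a b : PTerm) : Prop :=
  Step BetavRoot a b ∨ Step Sigma1Root a b ∨ Step Sigma3Root a b

theorem LS.mk {C : Ctx Empty} (hC : C.IsLeft) {r r' : PTerm} (h : Root r r') :
    LS (C.plug r) (C.plug r') := by
  rcases h with h | h | h
  · exact Or.inl ⟨C, r, r', hC, h, rfl, rfl⟩
  · exact Or.inr (Or.inl ⟨C, r, r', hC, h, rfl, rfl⟩)
  · exact Or.inr (Or.inr ⟨C, r, r', hC, h, rfl, rfl⟩)

theorem NLS.mk {C : Ctx Empty} (hC : ¬ C.IsLeft) {r r' : PTerm} (h : Root r r') :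
    NLS (C.plug r) (C.plug r') := by
  rcases h with h | h | h
  · exact Or.inl ⟨C, r, r', hC, h, rfl, rfl⟩
  · exact Or.inr (Or.inl ⟨C, r, r', hC, h, rfl, rfl⟩)
  · exact Or.inr (Or.inr ⟨C, r, r', hC, h, rfl, rfl⟩)

theorem WS.mk {C : Ctx Empty} (hC : C.IsWeak) {r r' : PTerm} (h : Root r r') :
    WS (C.plug r) (C.plug r') := by
  rcases h with h | h | h
  · exact Or.inl ⟨C, r, r', hC, h, rfl, rfl⟩
  · exact Or.inr (Or.inl ⟨C, r, r', hC, h, rfl, rfl⟩)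
  · exact Or.inr (Or.inr ⟨C, r, r', hC, h, rfl, rfl⟩)

theorem NWS.mk {C : Ctx Empty} (hC : ¬ C.IsWeak) {r r' : PTerm} (h : Root r r') :
    NWS (C.plug r) (C.plug r') := by
  rcases h with h | h | h
  · exact Or.inl ⟨C, r, r', hC, h, rfl, rfl⟩
  · exact Or.inr (Or.inl ⟨C, r, r', hC, h, rfl, rfl⟩)
  · exact Or.inr (Or.inr ⟨C, r, r', hC, h, rfl, rfl⟩)

theorem FS.mk (C : Ctx Empty) {r r' : PTerm} (h : Root r r') :
    FS (C.plug r) (C.plug r') := by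
  rcases h with h | h | h
  · exact Or.inl ⟨C, r, r', h, rfl, rfl⟩
  · exact Or.inr (Or.inl ⟨C, r, r', h, rfl, rfl⟩)
  · exact Or.inr (Or.inr ⟨C, r, r', h, rfl, rfl⟩)

theorem LS.elim' {a b : PTerm} (h : LS a b) :
    ∃ (C : Ctx Empty) (r r' : PTerm), C.IsLeft ∧ Root r r' ∧ a = C.plug r ∧ b = C.plug r' := by
  rcases h with ⟨C, r, r', hC, h, e1, e2⟩ | ⟨C, r, r', hC, h, e1, e2⟩ | ⟨C, r, r', hC, h, e1, e2⟩
  · exact ⟨C, r, r', hC, Or.inl h, e1, e2⟩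
  · exact ⟨C, r, r', hC, Or.inr (Or.inl h), e1, e2⟩
  · exact ⟨C, r, r', hC, Or.inr (Or.inr h), e1, e2⟩

theorem NLS.elim' {a b : PTerm} (h : NLS a b) :
    ∃ (C : Ctx Empty) (r r' : PTerm), ¬ C.IsLeft ∧ Root r r' ∧ a = C.plug r ∧ b = C.plug r' := by
  rcases h with ⟨C, r, r', hC, h, e1, e2⟩ | ⟨C, r, r', hC, h, e1, e2⟩ | ⟨C, r, r', hC, h, e1, e2⟩
  · exact ⟨C, r, r', hC, Or.inl h, e1, e2⟩
  · exact ⟨C, r, r', hC, Or.inr (Or.inl h), e1, e2⟩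
  · exact ⟨C, r, r', hC, Or.inr (Or.inr h), e1, e2⟩

theorem WS.elim' {a b : PTerm} (h : WS a b) :
    ∃ (C : Ctx Empty) (r r' : PTerm), C.IsWeak ∧ Root r r' ∧ a = C.plug r ∧ b = C.plug r' := by
  rcases h with ⟨C, r, r', hC, h, e1, e2⟩ | ⟨C, r, r', hC, h, e1, e2⟩ | ⟨C, r, r', hC, h, e1, e2⟩
  · exact ⟨C, r, r', hC, Or.inl h, e1, e2⟩
  · exact ⟨C, r, r', hC, Or.inr (Or.inl h), e1, e2⟩
  · exact ⟨C, r, r', hC, Or.inr (Or.inr h), e1, e2⟩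

theorem NWS.elim' {a b : PTerm} (h : NWS a b) :
    ∃ (C : Ctx Empty) (r r' : PTerm), ¬ C.IsWeak ∧ Root r r' ∧ a = C.plug r ∧ b = C.plug r' := by
  rcases h with ⟨C, r, r', hC, h, e1, e2⟩ | ⟨C, r, r', hC, h, e1, e2⟩ | ⟨C, r, r', hC, h, e1, e2⟩
  · exact ⟨C, r, r', hC, Or.inl h, e1, e2⟩
  · exact ⟨C, r, r', hC, Or.inr (Or.inl h), e1, e2⟩
  · exact ⟨C, r, r', hC, Or.inr (Or.inr h), e1, e2⟩

theorem FS.elim' {a b : PTerm} (h : FS a b) :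
    ∃ (C : Ctx Empty) (r r' : PTerm), Root r r' ∧ a = C.plug r ∧ b = C.plug r' := by
  rcases h with ⟨C, r, r', h, e1, e2⟩ | ⟨C, r, r', h, e1, e2⟩ | ⟨C, r, r', h, e1, e2⟩
  · exact ⟨C, r, r', Or.inl h, e1, e2⟩
  · exact ⟨C, r, r', Or.inr (Or.inl h), e1, e2⟩
  · exact ⟨C, r, r', Or.inr (Or.inr h), e1, e2⟩

theorem LS.fs {a b : PTerm} (h : LS a b) : FS a b := by
  obtain ⟨C, r, r', _, hr, e1, e2⟩ := h.elim'; subst e1; subst e2; exact FS.mk C hr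

theorem NLS.fs {a b : PTerm} (h : NLS a b) : FS a b := by
  obtain ⟨C, r, r', _, hr, e1, e2⟩ := h.elim'; subst e1; subst e2; exact FS.mk C hr

theorem WS.fs {a b : PTerm} (h : WS a b) : FS a b := by
  obtain ⟨C, r, r', _, hr, e1, e2⟩ := h.elim'; subst e1; subst e2; exact FS.mk C hr

theorem NWS.fs {a b : PTerm} (h : NWS a b) : FS a b := by
  obtain ⟨C, r, r', _, hr, e1, e2⟩ := h.elim'; subst e1; subst e2; exact FS.mk C hr

-- context facts
theorem not_isLeft_lam (C : Ctx Empty) : ¬ (Ctx.lam C).IsLeft := fun h => by cases h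

theorem not_isWeak_lam (C : Ctx Empty) : ¬ (Ctx.lam C).IsWeak := fun h => by cases h

theorem isLeft_appL_iff {C : Ctx Empty} {t : PTerm} :
    (Ctx.appL C t).IsLeft ↔ C.IsLeft :=
  ⟨fun h => by cases h; assumption, fun h => Ctx.IsLeft.appL t h⟩

theorem isLeft_appR_iff {C : Ctx Empty} {t : PTerm} :
    (Ctx.appR t C).IsLeft ↔ t.IsValue ∧ C.IsLeft :=
  ⟨fun h => by cases h; constructor <;> assumption, fun h => Ctx.IsLeft.appR h.1 h.2⟩

theorem isWeak_appL_iff {C : Ctx Empty} {t : PTerm} :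
    (Ctx.appL C t).IsWeak ↔ C.IsWeak :=
  ⟨fun h => by cases h; assumption, fun h => Ctx.IsWeak.appL t h⟩

theorem isWeak_appR_iff {C : Ctx Empty} {t : PTerm} :
    (Ctx.appR t C).IsWeak ↔ C.IsWeak :=
  ⟨fun h => by cases h; assumption, fun h => Ctx.IsWeak.appR t h⟩

-- transport of left/weak contexts along substitution and lifting
theorem left_ctx_subst {C : Ctx Empty} (hC : C.IsLeft) (n : ℕ) {u : PTerm}
    (hu : u.IsValue) :
    ∃ C' : Ctx Empty, C'.IsLeft ∧ ∀ r, subst n u (C.plug r) = C'.plug (subst n u r) := by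
  induction hC with
  | hole => exact ⟨Ctx.hole, Ctx.IsLeft.hole, fun r => rfl⟩
  | @appL C t hC ih =>
    obtain ⟨C', hC', he⟩ := ih
    exact ⟨Ctx.appL C' (subst n u t), Ctx.IsLeft.appL _ hC',
      fun r => by simp [Ctx.plug, subst, he r]⟩
  | @appR v C hv hC ih =>
    obtain ⟨C', hC', he⟩ := ih
    exact ⟨Ctx.appR (subst n u v) C', Ctx.IsLeft.appR (isValue_subst hv hu n) hC',
      fun r => by simp [Ctx.plug, subst, he r]⟩

theorem left_ctx_lift {C : Ctx Empty} (hC : C.IsLeft) (c : ℕ) :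
    ∃ C' : Ctx Empty, C'.IsLeft ∧ ∀ r, lift c (C.plug r) = C'.plug (lift c r) := by
  induction hC with
  | hole => exact ⟨Ctx.hole, Ctx.IsLeft.hole, fun r => rfl⟩
  | @appL C t hC ih =>
    obtain ⟨C', hC', he⟩ := ih
    exact ⟨Ctx.appL C' (lift c t), Ctx.IsLeft.appL _ hC',
      fun r => by simp [Ctx.plug, lift, he r]⟩
  | @appR v C hv hC ih =>
    obtain ⟨C', hC', he⟩ := ih
    exact ⟨Ctx.appR (lift c v) C', Ctx.IsLeft.appR (isValue_lift hv c) hC',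
      fun r => by simp [Ctx.plug, lift, he r]⟩

theorem weak_ctx_subst {C : Ctx Empty} (hC : C.IsWeak) (n : ℕ) (u : PTerm) :
    ∃ C' : Ctx Empty, C'.IsWeak ∧ ∀ r, subst n u (C.plug r) = C'.plug (subst n u r) := by
  induction hC with
  | hole => exact ⟨Ctx.hole, Ctx.IsWeak.hole, fun r => rfl⟩
  | @appL C t hC ih =>
    obtain ⟨C', hC', he⟩ := ih
    exact ⟨Ctx.appL C' (subst n u t), Ctx.IsWeak.appL _ hC',
      fun r => by simp [Ctx.plug, subst, he r]⟩
  | @appR t C hC ih =>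
    obtain ⟨C', hC', he⟩ := ih
    exact ⟨Ctx.appR (subst n u t) C', Ctx.IsWeak.appR _ hC',
      fun r => by simp [Ctx.plug, subst, he r]⟩

theorem weak_ctx_lift {C : Ctx Empty} (hC : C.IsWeak) (c : ℕ) :
    ∃ C' : Ctx Empty, C'.IsWeak ∧ ∀ r, lift c (C.plug r) = C'.plug (lift c r) := by
  induction hC with
  | hole => exact ⟨Ctx.hole, Ctx.IsWeak.hole, fun r => rfl⟩
  | @appL C t hC ih =>
    obtain ⟨C', hC', he⟩ := ih
    exact ⟨Ctx.appL C' (lift c t), Ctx.IsWeak.appL _ hC',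
      fun r => by simp [Ctx.plug, lift, he r]⟩
  | @appR t C hC ih =>
    obtain ⟨C', hC', he⟩ := ih
    exact ⟨Ctx.appR (lift c t) C', Ctx.IsWeak.appR _ hC',
      fun r => by simp [Ctx.plug, lift, he r]⟩

-- single-step substitutivity / lifting
theorem LS.subst {a b : PTerm} (h : LS a b) (n : ℕ) {u : PTerm} (hu : u.IsValue) :
    LS (subst n u a) (subst n u b) := by
  obtain ⟨C, r, r', hC, hr, rfl, rfl⟩ := h.elim'
  obtain ⟨C', hC', he⟩ := left_ctx_subst hC n hu
  rw [he, he]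
  exact LS.mk hC' (root_subst hr hu n)

theorem LS.lift {a b : PTerm} (h : LS a b) (c : ℕ) :
    LS (lift c a) (lift c b) := by
  obtain ⟨C, r, r', hC, hr, rfl, rfl⟩ := h.elim'
  obtain ⟨C', hC', he⟩ := left_ctx_lift hC c
  rw [he, he]
  exact LS.mk hC' (root_lift hr c)

theorem WS.subst {a b : PTerm} (h : WS a b) (n : ℕ) {u : PTerm} (hu : u.IsValue) :
    WS (subst n u a) (subst n u b) := by
  obtain ⟨C, r, r', hC, hr, rfl, rfl⟩ := h.elim'
  obtain ⟨C', hC', he⟩ := weak_ctx_subst hC n u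
  rw [he, he]
  exact WS.mk hC' (root_subst hr hu n)

theorem WS.lift {a b : PTerm} (h : WS a b) (c : ℕ) :
    WS (lift c a) (lift c b) := by
  obtain ⟨C, r, r', hC, hr, rfl, rfl⟩ := h.elim'
  obtain ⟨C', hC', he⟩ := weak_ctx_lift hC c
  rw [he, he]
  exact WS.mk hC' (root_lift hr c)

-- congruence lemmas (single steps)
theorem LS.appL {a b : PTerm} (h : LS a b) (t : PTerm) :
    LS (Term.app a t) (Term.app b t) := by
  obtain ⟨C, r, r', hC, hr, rfl, rfl⟩ := h.elim'
  exact LS.mk (C := Ctx.appL C t) (Ctx.IsLeft.appL t hC) hr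

theorem LS.appR {v a b : PTerm} (hv : v.IsValue) (h : LS a b) :
    LS (Term.app v a) (Term.app v b) := by
  obtain ⟨C, r, r', hC, hr, rfl, rfl⟩ := h.elim'
  exact LS.mk (C := Ctx.appR v C) (Ctx.IsLeft.appR hv hC) hr

theorem NLS.appL {a b : PTerm} (h : NLS a b) (t : PTerm) :
    NLS (Term.app a t) (Term.app b t) := by
  obtain ⟨C, r, r', hC, hr, rfl, rfl⟩ := h.elim'
  exact NLS.mk (C := Ctx.appL C t) (fun hh => hC (isLeft_appL_iff.1 hh)) hr

theorem NLS.appR_left {v a b : PTerm} (h : NLS a b) :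
    NLS (Term.app v a) (Term.app v b) := by
  obtain ⟨C, r, r', hC, hr, rfl, rfl⟩ := h.elim'
  exact NLS.mk (C := Ctx.appR v C) (fun hh => hC (isLeft_appR_iff.1 hh).2) hr

theorem NLS.appR_nonvalue {v a b : PTerm} (hv : ¬ v.IsValue) (h : FS a b) :
    NLS (Term.app v a) (Term.app v b) := by
  obtain ⟨C, r, r', hr, rfl, rfl⟩ := h.elim'
  exact NLS.mk (C := Ctx.appR v C) (fun hh => hv (isLeft_appR_iff.1 hh).1) hr

theorem NLS.lam {a b : PTerm} (h : FS a b) :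
    NLS (Term.lam a) (Term.lam b) := by
  obtain ⟨C, r, r', hr, rfl, rfl⟩ := h.elim'
  exact NLS.mk (C := Ctx.lam C) (not_isLeft_lam C) hr

theorem WS.appL {a b : PTerm} (h : WS a b) (t : PTerm) :
    WS (Term.app a t) (Term.app b t) := by
  obtain ⟨C, r, r', hC, hr, rfl, rfl⟩ := h.elim'
  exact WS.mk (C := Ctx.appL C t) (Ctx.IsWeak.appL t hC) hr

theorem WS.appR {a b : PTerm} (t : PTerm) (h : WS a b) :
    WS (Term.app t a) (Term.app t b) := by
  obtain ⟨C, r, r', hC, hr, rfl, rfl⟩ := h.elim'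
  exact WS.mk (C := Ctx.appR t C) (Ctx.IsWeak.appR t hC) hr

theorem NWS.appL {a b : PTerm} (h : NWS a b) (t : PTerm) :
    NWS (Term.app a t) (Term.app b t) := by
  obtain ⟨C, r, r', hC, hr, rfl, rfl⟩ := h.elim'
  exact NWS.mk (C := Ctx.appL C t) (fun hh => hC (isWeak_appL_iff.1 hh)) hr

theorem NWS.appR {a b : PTerm} (t : PTerm) (h : NWS a b) :
    NWS (Term.app t a) (Term.app t b) := by
  obtain ⟨C, r, r', hC, hr, rfl, rfl⟩ := h.elim'
  exact NWS.mk (C := Ctx.appR t C) (fun hh => hC (isWeak_appR_iff.1 hh)) hr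

theorem NWS.lam {a b : PTerm} (h : FS a b) :
    NWS (Term.lam a) (Term.lam b) := by
  obtain ⟨C, r, r', hr, rfl, rfl⟩ := h.elim'
  exact NWS.mk (C := Ctx.lam C) (not_isWeak_lam C) hr

-- values take no root shapes; preservation of (non)value by steps
theorem value_no_fs {v v' : PTerm} (hv : v.IsValue) (h : FS v v') : v'.IsValue := by
  obtain ⟨C, r, r', hr, rfl, rfl⟩ := h.elim'
  cases C with
  | hole =>
    exfalso
    rcases hr with ⟨p, w, _, e, _⟩ | ⟨t, w, s, e, _⟩ | ⟨w, t, s, _, e, _⟩ <;>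
      (simp only [Ctx.plug] at hv; rw [e] at hv; exact hv)
  | appL C t => exact hv.elim
  | appR t C => exact hv.elim
  | lam C => trivial

theorem nonvalue_nls {u u' : PTerm} (hu : ¬ u.IsValue) (h : NLS u u') : ¬ u'.IsValue := by
  obtain ⟨C, r, r', hC, hr, rfl, rfl⟩ := h.elim'
  cases C with
  | hole => exact absurd Ctx.IsLeft.hole hC
  | appL C t => exact fun hh => hh.elim
  | appR t C => exact fun hh => hh.elim
  | lam C => exact absurd trivial hu

-- multistep relations
def Hap : PTerm → PTerm → Prop := Relation.ReflTransGen LS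
def WHap : PTerm → PTerm → Prop := Relation.ReflTransGen WS
def NLs : PTerm → PTerm → Prop := Relation.ReflTransGen NLS
def NWs : PTerm → PTerm → Prop := Relation.ReflTransGen NWS
def Rs : PTerm → PTerm → Prop := Relation.ReflTransGen FS

theorem Hap.rs {a b : PTerm} (h : Hap a b) : Rs a b :=
  Relation.ReflTransGen.lift id (by intro _ _ hh; exact hh.fs) _ _ h

theorem NLs.rs {a b : PTerm} (h : NLs a b) : Rs a b :=
  Relation.ReflTransGen.lift id (by intro _ _ hh; exact hh.fs) _ _ h

theorem WHap.rs {a b : PTerm} (h : WHap a b) : Rs a b :=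
  Relation.ReflTransGen.lift id (by intro _ _ hh; exact hh.fs) _ _ h

theorem NWs.rs {a b : PTerm} (h : NWs a b) : Rs a b :=
  Relation.ReflTransGen.lift id (by intro _ _ hh; exact hh.fs) _ _ h

theorem Hap.appL {a b : PTerm} (h : Hap a b) (t : PTerm) :
    Hap (Term.app a t) (Term.app b t) :=
  Relation.ReflTransGen.lift (fun x => Term.app x t) (by intro _ _ hh; exact hh.appL t) _ _ h

theorem Hap.appR {v a b : PTerm} (hv : v.IsValue) (h : Hap a b) :
    Hap (Term.app v a) (Term.app v b) :=
  Relation.ReflTransGen.lift (fun x => Term.app v x) (by intro _ _ hh; exact hh.appR hv) _ _ h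

theorem Hap.subst {a b : PTerm} (h : Hap a b) (n : ℕ) {u : PTerm} (hu : u.IsValue) :
    Hap (subst n u a) (subst n u b) :=
  Relation.ReflTransGen.lift (fun x => Term.subst n u x) (by intro _ _ hh; exact hh.subst n hu) _ _ h

theorem Hap.lift' {a b : PTerm} (h : Hap a b) (c : ℕ) :
    Hap (lift c a) (lift c b) :=
  Relation.ReflTransGen.lift (fun x => Term.lift c x) (by intro _ _ hh; exact hh.lift c) _ _ h

theorem WHap.appL {a b : PTerm} (h : WHap a b) (t : PTerm) :
    WHap (Term.app a t) (Term.app b t) :=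
  Relation.ReflTransGen.lift (fun x => Term.app x t) (by intro _ _ hh; exact hh.appL t) _ _ h

theorem WHap.appR {a b : PTerm} (t : PTerm) (h : WHap a b) :
    WHap (Term.app t a) (Term.app t b) :=
  Relation.ReflTransGen.lift (fun x => Term.app t x) (by intro _ _ hh; exact hh.appR t) _ _ h

theorem WHap.subst {a b : PTerm} (h : WHap a b) (n : ℕ) {u : PTerm} (hu : u.IsValue) :
    WHap (subst n u a) (subst n u b) :=
  Relation.ReflTransGen.lift (fun x => Term.subst n u x) (by intro _ _ hh; exact hh.subst n hu) _ _ h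

theorem WHap.lift' {a b : PTerm} (h : WHap a b) (c : ℕ) :
    WHap (lift c a) (lift c b) :=
  Relation.ReflTransGen.lift (fun x => Term.lift c x) (by intro _ _ hh; exact hh.lift c) _ _ h

theorem NLs.appL {a b : PTerm} (h : NLs a b) (t : PTerm) :
    NLs (Term.app a t) (Term.app b t) :=
  Relation.ReflTransGen.lift (fun x => Term.app x t) (by intro _ _ hh; exact hh.appL t) _ _ h

theorem NLs.appR_left {v : PTerm} {a b : PTerm} (h : NLs a b) :
    NLs (Term.app v a) (Term.app v b) :=
  Relation.ReflTransGen.lift (fun x => Term.app v x) (by intro _ _ hh; exact hh.appR_left) _ _ h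

theorem Rs.appR_nonvalue {v a b : PTerm} (hv : ¬ v.IsValue) (h : Rs a b) :
    NLs (Term.app v a) (Term.app v b) :=
  Relation.ReflTransGen.lift (fun x => Term.app v x)
    (by intro _ _ hh; exact NLS.appR_nonvalue hv hh) _ _ h

theorem Rs.lam_nls {a b : PTerm} (h : Rs a b) : NLs (Term.lam a) (Term.lam b) :=
  Relation.ReflTransGen.lift Term.lam (by intro _ _ hh; exact NLS.lam hh) _ _ h

theorem NWs.appL {a b : PTerm} (h : NWs a b) (t : PTerm) :
    NWs (Term.app a t) (Term.app b t) :=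
  Relation.ReflTransGen.lift (fun x => Term.app x t) (by intro _ _ hh; exact hh.appL t) _ _ h

theorem NWs.appR {a b : PTerm} (t : PTerm) (h : NWs a b) :
    NWs (Term.app t a) (Term.app t b) :=
  Relation.ReflTransGen.lift (fun x => Term.app t x) (by intro _ _ hh; exact hh.appR t) _ _ h

theorem Rs.lam_nws {a b : PTerm} (h : Rs a b) : NWs (Term.lam a) (Term.lam b) :=
  Relation.ReflTransGen.lift Term.lam (by intro _ _ hh; exact NWS.lam hh) _ _ h

theorem value_no_rs {v v' : PTerm} (hv : v.IsValue) (h : Rs v v') : v'.IsValue := by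
  induction h with
  | refl => exact hv
  | tail _ hstep ih => exact value_no_fs ih hstep

theorem nonvalue_nls_rtg {u u' : PTerm} (hu : ¬ u.IsValue) (h : NLs u u') :
    ¬ u'.IsValue := by
  induction h with
  | refl => exact hu
  | tail _ hstep ih => exact nonvalue_nls ih hstep

/-- Kashima-style standardization predicate for left factorization. -/
inductive St : PTerm → PTerm → Prop where
  | var {t : PTerm} {n : ℕ} : Hap t (Term.var n) → St t (Term.var n)
  | lam {t t' s : PTerm} : Hap t (Term.lam t') → St t' s → St t (Term.lam s)
  | app {t t1 t2 s1 s2 : PTerm} :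
      Hap t (Term.app t1 t2) → St t1 s1 → St t2 s2 → St t (Term.app s1 s2)

theorem St.rfl : ∀ t : PTerm, St t t := by
  intro t
  induction t with
  | var n => exact St.var Relation.ReflTransGen.refl
  | const k => exact k.elim
  | lam t ih => exact St.lam Relation.ReflTransGen.refl ih
  | app a b iha ihb => exact St.app Relation.ReflTransGen.refl iha ihb

theorem hap_st {t u s : PTerm} (h : Hap t u) (hs : St u s) : St t s := by
  cases hs with
  | var h' => exact St.var (h.trans h')
  | lam h' h1 => exact St.lam (h.trans h') h1
  | app h' h1 h2 => exact St.app (h.trans h') h1 h2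

theorem st_lift {t s : PTerm} (h : St t s) : ∀ c, St (lift c t) (lift c s) := by
  induction h with
  | @var t n h =>
    intro c
    obtain ⟨m', hm⟩ : ∃ m', Term.lift c (Term.var n) = Term.var m' := by
      simp only [Term.lift]; split <;> exact ⟨_, rfl⟩
    exact hm ▸ St.var (hm ▸ h.lift' c)
  | @lam t t' s h h1 ih => intro c; exact St.lam (h.lift' c) (ih (c+1))
  | @app t t1 t2 s1 s2 h h1 h2 ih1 ih2 =>
    intro c; exact St.app (h.lift' c) (ih1 c) (ih2 c)

theorem st_subst {t s : PTerm} (h : St t s) :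
    ∀ (n : ℕ) {u w : PTerm}, u.IsValue → St u w →
      St (Term.subst n u t) (Term.subst n w s) := by
  induction h with
  | @var t m h =>
    intro n u w hu huw
    have h' := h.subst n hu
    by_cases hmn : m = n
    · subst hmn
      simp only [Term.subst, if_pos rfl] at h' ⊢
      exact hap_st h' huw
    · have e : Term.subst n u (Term.var m) = Term.subst n w (Term.var m) := by
        simp [Term.subst, hmn]
      obtain ⟨m', hm⟩ : ∃ m', Term.subst n w (Term.var m) = Term.var m' := by
        simp only [Term.subst, if_neg hmn]; split <;> exact ⟨_, rfl⟩
      rw [e, hm] at h'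
      exact hm ▸ St.var h'
  | @lam t t' s h h1 ih =>
    intro n u w hu huw
    exact St.lam (h.subst n hu)
      (ih (n+1) (isValue_lift hu 0) (st_lift huw 0))
  | @app t t1 t2 s1 s2 h h1 h2 ih1 ih2 =>
    intro n u w hu huw
    exact St.app (h.subst n hu) (ih1 n hu huw) (ih2 n hu huw)

theorem st_app_inv {t a b : PTerm} (h : St t (Term.app a b)) :
    ∃ t1 t2, Hap t (Term.app t1 t2) ∧ St t1 a ∧ St t2 b := by
  cases h with
  | app h h1 h2 => exact ⟨_, _, h, h1, h2⟩

theorem st_lam_inv {t a : PTerm} (h : St t (Term.lam a)) :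
    ∃ t', Hap t (Term.lam t') ∧ St t' a := by
  cases h with
  | lam h h1 => exact ⟨_, h, h1⟩

theorem st_value_inv {t v : PTerm} (hv : v.IsValue) (h : St t v) :
    ∃ w, Hap t w ∧ w.IsValue ∧ St w v := by
  cases h with
  | var h => exact ⟨_, h, trivial, St.var Relation.ReflTransGen.refl⟩
  | lam h h1 => exact ⟨_, h, trivial, St.lam Relation.ReflTransGen.refl h1⟩
  | app h h1 h2 => exact hv.elim

theorem ls_root {r r' : PTerm} (h : Root r r') : LS r r' :=
  LS.mk (C := Ctx.hole) Ctx.IsLeft.hole h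

theorem st_root {r r' t : PTerm} (hr : Root r r') (h : St t r) : St t r' := by
  rcases hr with ⟨p, v, hv, rfl, rfl⟩ | ⟨a, b, c₀, rfl, rfl⟩ | ⟨v, a, b, hv, rfl, rfl⟩
  · -- βv
    obtain ⟨t1, t2, h0, h1, h2⟩ := st_app_inv h
    obtain ⟨p₁, h1l, h1s⟩ := st_lam_inv h1
    obtain ⟨w, h2h, hw, h2s⟩ := st_value_inv hv h2
    have hap1 : Hap t (Term.app (Term.lam p₁) w) :=
      (h0.trans (h1l.appL t2)).trans (h2h.appR trivial)
    have hroot : LS (Term.app (Term.lam p₁) w) (Term.subst 0 w p₁) :=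
      ls_root (Or.inl ⟨p₁, w, hw, rfl, rfl⟩)
    exact hap_st (hap1.tail hroot) (st_subst h1s 0 hw h2s)
  · -- σ1
    obtain ⟨t1, t2, h0, h1, h2⟩ := st_app_inv h
    obtain ⟨t11, t12, h10, h11, h12⟩ := st_app_inv h1
    obtain ⟨a₁, h11l, h11s⟩ := st_lam_inv h11
    have hap1 : Hap t (Term.app (Term.app (Term.lam a₁) t12) t2) :=
      (h0.trans ((h10.appL t2))).trans (((h11l.appL t12)).appL t2)
    have hroot : LS (Term.app (Term.app (Term.lam a₁) t12) t2)
        (Term.app (Term.lam (Term.app a₁ (Term.lift 0 t2))) t12) :=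
      ls_root (Or.inr (Or.inl ⟨a₁, t12, t2, rfl, rfl⟩))
    refine hap_st (hap1.tail hroot) ?_
    exact St.app Relation.ReflTransGen.refl
      (St.lam Relation.ReflTransGen.refl
        (St.app Relation.ReflTransGen.refl h11s (st_lift h2 0))) h12
  · -- σ3
    obtain ⟨t1, t2, h0, h1, h2⟩ := st_app_inv h
    obtain ⟨w, h1h, hw, h1s⟩ := st_value_inv hv h1
    obtain ⟨t21, t22, h20, h21, h22⟩ := st_app_inv h2
    obtain ⟨a₁, h21l, h21s⟩ := st_lam_inv h21
    have hap1 : Hap t (Term.app w (Term.app (Term.lam a₁) t22)) :=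
      ((h0.trans (h1h.appL t2)).trans (h20.appR hw)).trans
        (((h21l.appL t22)).appR hw)
    have hroot : LS (Term.app w (Term.app (Term.lam a₁) t22))
        (Term.app (Term.lam (Term.app (Term.lift 0 w) a₁)) t22) :=
      ls_root (Or.inr (Or.inr ⟨w, a₁, t22, hw, rfl, rfl⟩))
    refine hap_st (hap1.tail hroot) ?_
    exact St.app Relation.ReflTransGen.refl
      (St.lam Relation.ReflTransGen.refl
        (St.app Relation.ReflTransGen.refl (st_lift h1s 0) h21s)) h22

theorem st_plug : ∀ (C : Ctx Empty) {r r' t : PTerm}, Root r r' →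
    St t (C.plug r) → St t (C.plug r') := by
  intro C
  induction C with
  | hole => intro r r' t hr h; exact st_root hr h
  | appL C u ih =>
    intro r r' t hr h
    obtain ⟨t1, t2, h0, h1, h2⟩ := st_app_inv h
    exact St.app h0 (ih hr h1) h2
  | appR u C ih =>
    intro r r' t hr h
    obtain ⟨t1, t2, h0, h1, h2⟩ := st_app_inv h
    exact St.app h0 h1 (ih hr h2)
  | lam C ih =>
    intro r r' t hr h
    obtain ⟨t', h0, h1⟩ := st_lam_inv h
    exact St.lam h0 (ih hr h1)

theorem st_step {t a b : PTerm} (h : St t a) (hs : FS a b) : St t b := by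
  obtain ⟨C, r, r', hr, rfl, rfl⟩ := hs.elim'
  exact st_plug C hr h

theorem st_of_rs {t s : PTerm} (h : Rs t s) : St t s := by
  induction h with
  | refl => exact St.rfl t
  | tail _ hstep ih => exact st_step ih hstep

theorem st_fact {t s : PTerm} (h : St t s) : ∃ u, Hap t u ∧ NLs u s := by
  induction h with
  | @var t n h => exact ⟨_, h, Relation.ReflTransGen.refl⟩
  | @lam t t' s h h1 ih =>
    obtain ⟨u', a1, b1⟩ := ih
    exact ⟨Term.lam t', h, Rs.lam_nls (a1.rs.trans b1.rs)⟩
  | @app t t1 t2 s1 s2 h h1 h2 ih1 ih2 =>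
    obtain ⟨u1, a1, b1⟩ := ih1
    obtain ⟨u2, a2, b2⟩ := ih2
    by_cases hu1 : u1.IsValue
    · exact ⟨Term.app u1 u2,
        (h.trans (a1.appL t2)).trans (a2.appR hu1),
        (b1.appL u2).trans (b2.appR_left)⟩
    · exact ⟨Term.app u1 t2,
        h.trans (a1.appL t2),
        (Rs.appR_nonvalue hu1 (a2.rs.trans b2.rs)).trans (b1.appL s2)⟩

/-- Kashima-style standardization predicate for weak factorization. -/
inductive Wst : PTerm → PTerm → Prop where
  | var {t : PTerm} {n : ℕ} : WHap t (Term.var n) → Wst t (Term.var n)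
  | lam {t t' s : PTerm} : WHap t (Term.lam t') → Wst t' s → Wst t (Term.lam s)
  | app {t t1 t2 s1 s2 : PTerm} :
      WHap t (Term.app t1 t2) → Wst t1 s1 → Wst t2 s2 → Wst t (Term.app s1 s2)

theorem Wst.rfl : ∀ t : PTerm, Wst t t := by
  intro t
  induction t with
  | var n => exact Wst.var Relation.ReflTransGen.refl
  | const k => exact k.elim
  | lam t ih => exact Wst.lam Relation.ReflTransGen.refl ih
  | app a b iha ihb => exact Wst.app Relation.ReflTransGen.refl iha ihb

theorem whap_wst {t u s : PTerm} (h : WHap t u) (hs : Wst u s) : Wst t s := by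
  cases hs with
  | var h' => exact Wst.var (h.trans h')
  | lam h' h1 => exact Wst.lam (h.trans h') h1
  | app h' h1 h2 => exact Wst.app (h.trans h') h1 h2

theorem wst_lift {t s : PTerm} (h : Wst t s) : ∀ c, Wst (lift c t) (lift c s) := by
  induction h with
  | @var t n h =>
    intro c
    obtain ⟨m', hm⟩ : ∃ m', Term.lift c (Term.var n) = Term.var m' := by
      simp only [Term.lift]; split <;> exact ⟨_, rfl⟩
    exact hm ▸ Wst.var (hm ▸ h.lift' c)
  | @lam t t' s h h1 ih => intro c; exact Wst.lam (h.lift' c) (ih (c+1))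
  | @app t t1 t2 s1 s2 h h1 h2 ih1 ih2 =>
    intro c; exact Wst.app (h.lift' c) (ih1 c) (ih2 c)

theorem wst_subst {t s : PTerm} (h : Wst t s) :
    ∀ (n : ℕ) {u w : PTerm}, u.IsValue → Wst u w →
      Wst (Term.subst n u t) (Term.subst n w s) := by
  induction h with
  | @var t m h =>
    intro n u w hu huw
    have h' := h.subst n hu
    by_cases hmn : m = n
    · subst hmn
      simp only [Term.subst, if_pos rfl] at h' ⊢
      exact whap_wst h' huw
    · have e : Term.subst n u (Term.var m) = Term.subst n w (Term.var m) := by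
        simp [Term.subst, hmn]
      obtain ⟨m', hm⟩ : ∃ m', Term.subst n w (Term.var m) = Term.var m' := by
        simp only [Term.subst, if_neg hmn]; split <;> exact ⟨_, rfl⟩
      rw [e, hm] at h'
      exact hm ▸ Wst.var h'
  | @lam t t' s h h1 ih =>
    intro n u w hu huw
    exact Wst.lam (h.subst n hu)
      (ih (n+1) (isValue_lift hu 0) (wst_lift huw 0))
  | @app t t1 t2 s1 s2 h h1 h2 ih1 ih2 =>
    intro n u w hu huw
    exact Wst.app (h.subst n hu) (ih1 n hu huw) (ih2 n hu huw)

theorem wst_app_inv {t a b : PTerm} (h : Wst t (Term.app a b)) :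
    ∃ t1 t2, WHap t (Term.app t1 t2) ∧ Wst t1 a ∧ Wst t2 b := by
  cases h with
  | app h h1 h2 => exact ⟨_, _, h, h1, h2⟩

theorem wst_lam_inv {t a : PTerm} (h : Wst t (Term.lam a)) :
    ∃ t', WHap t (Term.lam t') ∧ Wst t' a := by
  cases h with
  | lam h h1 => exact ⟨_, h, h1⟩

theorem wst_value_inv {t v : PTerm} (hv : v.IsValue) (h : Wst t v) :
    ∃ w, WHap t w ∧ w.IsValue ∧ Wst w v := by
  cases h with
  | var h => exact ⟨_, h, trivial, Wst.var Relation.ReflTransGen.refl⟩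
  | lam h h1 => exact ⟨_, h, trivial, Wst.lam Relation.ReflTransGen.refl h1⟩
  | app h h1 h2 => exact hv.elim

theorem ws_root {r r' : PTerm} (h : Root r r') : WS r r' :=
  WS.mk (C := Ctx.hole) Ctx.IsWeak.hole h

theorem wst_root {r r' t : PTerm} (hr : Root r r') (h : Wst t r) : Wst t r' := by
  rcases hr with ⟨p, v, hv, rfl, rfl⟩ | ⟨a, b, c₀, rfl, rfl⟩ | ⟨v, a, b, hv, rfl, rfl⟩
  · -- βv
    obtain ⟨t1, t2, h0, h1, h2⟩ := wst_app_inv h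
    obtain ⟨p₁, h1l, h1s⟩ := wst_lam_inv h1
    obtain ⟨w, h2h, hw, h2s⟩ := wst_value_inv hv h2
    have hap1 : WHap t (Term.app (Term.lam p₁) w) :=
      (h0.trans (h1l.appL t2)).trans (h2h.appR _)
    have hroot : WS (Term.app (Term.lam p₁) w) (Term.subst 0 w p₁) :=
      ws_root (Or.inl ⟨p₁, w, hw, rfl, rfl⟩)
    exact whap_wst (hap1.tail hroot) (wst_subst h1s 0 hw h2s)
  · -- σ1
    obtain ⟨t1, t2, h0, h1, h2⟩ := wst_app_inv h
    obtain ⟨t11, t12, h10, h11, h12⟩ := wst_app_inv h1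
    obtain ⟨a₁, h11l, h11s⟩ := wst_lam_inv h11
    have hap1 : WHap t (Term.app (Term.app (Term.lam a₁) t12) t2) :=
      (h0.trans ((h10.appL t2))).trans (((h11l.appL t12)).appL t2)
    have hroot : WS (Term.app (Term.app (Term.lam a₁) t12) t2)
        (Term.app (Term.lam (Term.app a₁ (Term.lift 0 t2))) t12) :=
      ws_root (Or.inr (Or.inl ⟨a₁, t12, t2, rfl, rfl⟩))
    refine whap_wst (hap1.tail hroot) ?_
    exact Wst.app Relation.ReflTransGen.refl
      (Wst.lam Relation.ReflTransGen.refl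
        (Wst.app Relation.ReflTransGen.refl h11s (wst_lift h2 0))) h12
  · -- σ3
    obtain ⟨t1, t2, h0, h1, h2⟩ := wst_app_inv h
    obtain ⟨w, h1h, hw, h1s⟩ := wst_value_inv hv h1
    obtain ⟨t21, t22, h20, h21, h22⟩ := wst_app_inv h2
    obtain ⟨a₁, h21l, h21s⟩ := wst_lam_inv h21
    have hap1 : WHap t (Term.app w (Term.app (Term.lam a₁) t22)) :=
      ((h0.trans (h1h.appL t2)).trans (h20.appR _)).trans
        (((h21l.appL t22)).appR _)
    have hroot : WS (Term.app w (Term.app (Term.lam a₁) t22))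
        (Term.app (Term.lam (Term.app (Term.lift 0 w) a₁)) t22) :=
      ws_root (Or.inr (Or.inr ⟨w, a₁, t22, hw, rfl, rfl⟩))
    refine whap_wst (hap1.tail hroot) ?_
    exact Wst.app Relation.ReflTransGen.refl
      (Wst.lam Relation.ReflTransGen.refl
        (Wst.app Relation.ReflTransGen.refl (wst_lift h1s 0) h21s)) h22

theorem wst_plug : ∀ (C : Ctx Empty) {r r' t : PTerm}, Root r r' →
    Wst t (C.plug r) → Wst t (C.plug r') := by
  intro C
  induction C with
  | hole => intro r r' t hr h; exact wst_root hr h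
  | appL C u ih =>
    intro r r' t hr h
    obtain ⟨t1, t2, h0, h1, h2⟩ := wst_app_inv h
    exact Wst.app h0 (ih hr h1) h2
  | appR u C ih =>
    intro r r' t hr h
    obtain ⟨t1, t2, h0, h1, h2⟩ := wst_app_inv h
    exact Wst.app h0 h1 (ih hr h2)
  | lam C ih =>
    intro r r' t hr h
    obtain ⟨t', h0, h1⟩ := wst_lam_inv h
    exact Wst.lam h0 (ih hr h1)

theorem wst_step {t a b : PTerm} (h : Wst t a) (hs : FS a b) : Wst t b := by
  obtain ⟨C, r, r', hr, rfl, rfl⟩ := hs.elim'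
  exact wst_plug C hr h

theorem wst_of_rs {t s : PTerm} (h : Rs t s) : Wst t s := by
  induction h with
  | refl => exact Wst.rfl t
  | tail _ hstep ih => exact wst_step ih hstep

theorem wst_fact {t s : PTerm} (h : Wst t s) : ∃ u, WHap t u ∧ NWs u s := by
  induction h with
  | @var t n h => exact ⟨_, h, Relation.ReflTransGen.refl⟩
  | @lam t t' s h h1 ih =>
    obtain ⟨u', a1, b1⟩ := ih
    exact ⟨Term.lam t', h, Rs.lam_nws (a1.rs.trans b1.rs)⟩
  | @app t t1 t2 s1 s2 h h1 h2 ih1 ih2 =>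
    obtain ⟨u1, a1, b1⟩ := ih1
    obtain ⟨u2, a2, b2⟩ := ih2
    exact ⟨Term.app u1 u2,
      (h.trans (a1.appL t2)).trans (a2.appR u1),
      (b1.appL u2).trans (b2.appR s1)⟩

end Fact
/-- Left and weak factorization of the shuffling calculus →sh = →βv ∪ →σ1 ∪ →σ3. -/
theorem shuffling_left_and_weak_factorization :
    (∀ t s : PTerm,
      Relation.ReflTransGen
        (fun a b => Step BetavRoot a b ∨ Step Sigma1Root a b ∨ Step Sigma3Root a b) t s →
      ∃ u, Relation.ReflTransGen
          (fun a b => LeftStep BetavRoot a b ∨ LeftStep Sigma1Root a b ∨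
            LeftStep Sigma3Root a b) t u ∧
        Relation.ReflTransGen
          (fun a b => NonLeftStep BetavRoot a b ∨ NonLeftStep Sigma1Root a b ∨
            NonLeftStep Sigma3Root a b) u s)
    ∧
    (∀ t s : PTerm,
      Relation.ReflTransGen
        (fun a b => Step BetavRoot a b ∨ Step Sigma1Root a b ∨ Step Sigma3Root a b) t s →
      ∃ u, Relation.ReflTransGen
          (fun a b => WeakStep BetavRoot a b ∨ WeakStep Sigma1Root a b ∨
            WeakStep Sigma3Root a b) t u ∧
        Relation.ReflTransGen
          (fun a b => NonWeakStep BetavRoot a b ∨ NonWeakStep Sigma1Root a b ∨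
            NonWeakStep Sigma3Root a b) u s) := by
  constructor
  · intro t s h
    obtain ⟨u, h1, h2⟩ := Fact.st_fact (Fact.st_of_rs h)
    exact ⟨u, h1, h2⟩
  · intro t s h
    obtain ⟨u, h1, h2⟩ := Fact.wst_fact (Fact.wst_of_rs h)
    exact ⟨u, h1, h2⟩
end
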